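/- arXiv:1504.01538 — 5 statements merged into one kernel-verified Lean document; each statement's English description precedes it below -/
import Mathlib

section
/- In the quantum semigroup 𝒜_{r,s}(n), the quantum row-determinant equals the quantum column-determinant: rdet_r(A) = cdet_{s⁻¹}(A). -/
open scoped TensorProduct Classical

noncomputable section Prelude

variable {F : Type*} [Field F] {R : Type*} [Ring R] [Algebra F R]

/-- The number of inversions `l(σ)` of a permutation `σ ∈ S_n`. -/
def inversions {n : ℕ} (σ : Equiv.Perm (Fin n)) : ℕ :=
  (Finset.univ.filter fun p : Fin n × Fin n => p.1 < p.2 ∧ σ p.2 < σ p.1).card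

/-- The quantum row determinant `rdet_r(A) = Σ_σ (-r)^{l(σ)} a_{1σ(1)} ⋯ a_{nσ(n)}`. -/
def rdet (r : F) {n : ℕ} (a : Fin n → Fin n → R) : R :=
  ∑ σ : Equiv.Perm (Fin n), (-r) ^ inversions σ • (List.ofFn fun i => a i (σ i)).prod

/-- The quantum column determinant `cdet_{s⁻¹}(A) = Σ_σ (-s)^{-l(σ)} a_{σ(1)1} ⋯ a_{σ(n)n}`. -/
def cdet (s : F) {n : ℕ} (a : Fin n → Fin n → R) : R :=
  ∑ σ : Equiv.Perm (Fin n),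
    ((-s) ^ (-(inversions σ : ℤ))) • (List.ofFn fun i => a (σ i) i).prod

/-- The quantum (column) permanent `per_q(A) = Σ_σ q^{l(σ)} a_{σ(1)1} ⋯ a_{σ(n)n}`. -/
def qper (q : F) {n : ℕ} (a : Fin n → Fin n → R) : R :=
  ∑ σ : Equiv.Perm (Fin n), q ^ inversions σ • (List.ofFn fun i => a (σ i) i).prod

/-- The defining relations of the two-parameter quantum semigroup `𝒜_{r,s}(n)`:
`a` plays the role of the matrix of generators `(a_{ij})`. -/
def IsQSemigroup (r s : F) {n : ℕ} (a : Fin n → Fin n → R) : Prop :=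
  (∀ i k l : Fin n, k < l → a i k * a i l = r • (a i l * a i k)) ∧
  (∀ i j k : Fin n, i < j → a i k * a j k = s⁻¹ • (a j k * a i k)) ∧
  (∀ i j k l : Fin n, i < j → k < l → r • (a i l * a j k) = s⁻¹ • (a j k * a i l)) ∧
  (∀ i j k l : Fin n, i < j → k < l →
    a i k * a j l - a j l * a i k = (r - s) • (a i l * a j k))

/-- The quantum integer `[m]_v = 1 + v + ⋯ + v^{m-1}`. -/
def qint (v : F) (m : ℕ) : F := ∑ k ∈ Finset.range m, v ^ k

/-- The quantum factorial `[n]_v! = [n]_v [n-1]_v ⋯ [1]_v`. -/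
def qfac (v : F) (n : ℕ) : F := ∏ m ∈ Finset.range n, qint v (m + 1)

/-- The position `2i-1` (1-based), i.e. `2i` (0-based), in `Fin (2n)`. -/
def pL {n : ℕ} (i : Fin n) : Fin (2 * n) := ⟨2 * i.1, by have := i.2; omega⟩

/-- The position `2i` (1-based), i.e. `2i+1` (0-based), in `Fin (2n)`. -/
def pR {n : ℕ} (i : Fin n) : Fin (2 * n) := ⟨2 * i.1 + 1, by have := i.2; omega⟩

/-- The product `b_{σ(1)σ(2)} b_{σ(3)σ(4)} ⋯ b_{σ(2n-1)σ(2n)}`. -/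
def pairProd {n : ℕ} (b : Fin (2 * n) → Fin (2 * n) → R) (σ : Equiv.Perm (Fin (2 * n))) : R :=
  (List.ofFn fun i : Fin n => b (σ (pL i)) (σ (pR i))).prod

/-- Membership in `Π′`: `σ(2i-1) < σ(2i)` for all `i = 1, …, n`. -/
def inPi' {n : ℕ} (σ : Equiv.Perm (Fin (2 * n))) : Prop := ∀ i : Fin n, σ (pL i) < σ (pR i)

/-- Membership in `Π`: additionally `σ(1) < σ(3) < ⋯ < σ(2n-1)`. -/
def inPi {n : ℕ} (σ : Equiv.Perm (Fin (2 * n))) : Prop :=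
  inPi' σ ∧ ∀ i j : Fin n, i < j → σ (pL i) < σ (pL j)

/-- `Σ_{σ∈Π′} (-r)^{l(σ)} b_{σ(1)σ(2)} ⋯ b_{σ(2n-1)σ(2n)}`. -/
def pfSum (r : F) {n : ℕ} (b : Fin (2 * n) → Fin (2 * n) → R) : R :=
  ∑ σ : Equiv.Perm (Fin (2 * n)), if inPi' σ then (-r) ^ inversions σ • pairProd b σ else 0

/-- The quantum Pfaffian `Pf_r(B)`. -/
def Pf (r : F) {n : ℕ} (b : Fin (2 * n) → Fin (2 * n) → R) : R :=
  (qfac (r ^ 4) n)⁻¹ • pfSum r b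

/-- `Σ_{σ∈Π′} (-s)^{-l(σ)} b_{σ(1)σ(2)} ⋯ b_{σ(2n-1)σ(2n)}`. -/
def pfSumInv (s : F) {n : ℕ} (b : Fin (2 * n) → Fin (2 * n) → R) : R :=
  ∑ σ : Equiv.Perm (Fin (2 * n)),
    if inPi' σ then ((-s) ^ (-(inversions σ : ℤ))) • pairProd b σ else 0

/-- The quantum Pfaffian with parameter `s⁻¹`, `Pf_{s⁻¹}(B)`. -/
def PfInv (s : F) {n : ℕ} (b : Fin (2 * n) → Fin (2 * n) → R) : R :=
  (qfac (s⁻¹ ^ 4) n)⁻¹ • pfSumInv s b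

/-- `Σ_{σ∈Π′} q^{l(σ)} b_{σ(1)σ(2)} ⋯ b_{σ(2n-1)σ(2n)}`. -/
def hfSum (q : F) {n : ℕ} (b : Fin (2 * n) → Fin (2 * n) → R) : R :=
  ∑ σ : Equiv.Perm (Fin (2 * n)), if inPi' σ then q ^ inversions σ • pairProd b σ else 0

/-- The quantum Hafnian `Hf_q(B)`. -/
def Hf (q : F) {n : ℕ} (b : Fin (2 * n) → Fin (2 * n) → R) : R :=
  (qfac (q ^ 4) n)⁻¹ • hfSum q b

/-- The `q`-Maya (`q`-Plücker) relations. -/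
def MayaRels (q : F) {n : ℕ} (b : Fin (2 * n) → Fin (2 * n) → R) : Prop :=
  ∀ i j k l : Fin (2 * n), i < j → j < k → k < l →
    b i j * b k l - q • (b i k * b j l) + q ^ 2 • (b i l * b j k) =
      b k l * b i j - q⁻¹ • (b j l * b i k) + q⁻¹ ^ 2 • (b j k * b i l)

/-- The `(−q)`-Maya relations. -/
def NegMayaRels (q : F) {n : ℕ} (b : Fin (2 * n) → Fin (2 * n) → R) : Prop :=
  ∀ i j k l : Fin (2 * n), i < j → j < k → k < l →
    b i j * b k l + q • (b i k * b j l) + q ^ 2 • (b i l * b j k) =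
      b k l * b i j + q⁻¹ • (b j l * b i k) + q⁻¹ ^ 2 • (b j k * b i l)

end Prelude

/-!
Bring `a₁σ(1) ⋯ aₙσ(n)` into column order by insertion: the factor `a_{iσ(i)}` is moved to the
right past the factors `a_{jσ(j)}` with `j > i` and `σ(j) < σ(i)`, and each such move uses
`r a_{il} a_{jk} = s⁻¹ a_{jk} a_{il}` (`i < j`, `k < l`) to trade one `r` for one `s⁻¹`. The moves
are the `l(σ)` inversions of `σ`, so `r^{l(σ)} a₁σ(1) ⋯ aₙσ(n) = s^{-l(σ)} a_{σ⁻¹(1)1} ⋯ a_{σ⁻¹(n)n}`,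
and since `l(σ⁻¹) = l(σ)` the two determinants agree term by term after `σ ↦ σ⁻¹`.
-/

section QCommute

variable {F R : Type*} [CommSemiring F] [Semiring R] [Algebra F R]

def QCommute (c d : F) (x y : R) : Prop := c • (x * y) = d • (y * x)

theorem QCommute.list_prod_right {c d : F} {x : R} {l : List R}
    (h : ∀ y ∈ l, QCommute c d x y) : QCommute (c ^ l.length) (d ^ l.length) x l.prod := by
  induction l with
  | nil => simp [QCommute]
  | cons y l ih =>
    rw [List.forall_mem_cons] at h
    have hxy : c • (x * y) = d • (y * x) := h.1
    have hxl : c ^ l.length • (x * l.prod) = d ^ l.length • (l.prod * x) := ih h.2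
    calc (c ^ (l.length + 1)) • (x * (y * l.prod))
        = c ^ l.length • ((c • (x * y)) * l.prod) := by
          rw [pow_succ, mul_smul, smul_mul_assoc, mul_assoc]
      _ = d • (y * (c ^ l.length • (x * l.prod))) := by
          rw [hxy, smul_mul_assoc, smul_comm, mul_smul_comm, mul_assoc]
      _ = d ^ (l.length + 1) • (y * l.prod * x) := by
          rw [hxl, mul_smul_comm, ← mul_smul, ← pow_succ', mul_assoc]

end QCommute

section InversionCount

variable {α β : Type*}

def inversionCount [LT β] [DecidableLT β] (g : α → β) : List α → ℕ
  | [] => 0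
  | x :: l => l.countP (fun y => g y < g x) + inversionCount g l

theorem inversionCount_eq_sum [Preorder α] [LT β] [DecidableLT α] [DecidableLT β]
    (g : α → β) {l : List α} (hl : l.Pairwise (· < ·)) :
    inversionCount g l = (l.map fun x => l.countP fun y => x < y ∧ g y < g x).sum := by
  induction l with
  | nil => rfl
  | cons x l ih =>
    rw [List.pairwise_cons] at hl
    have head : (x :: l).countP (fun y => x < y ∧ g y < g x) = l.countP (fun y => g y < g x) := by
      rw [List.countP_cons_of_neg (by simp)]
      exact List.countP_congr fun y hy => by simp [hl.1 y hy]
    have tail : ∀ z ∈ l, (x :: l).countP (fun y => z < y ∧ g y < g z)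
        = l.countP (fun y => z < y ∧ g y < g z) := fun z hz =>
      List.countP_cons_of_neg (by simp [(hl.1 z hz).not_gt])
    rw [inversionCount, ih hl.2, List.map_cons, List.sum_cons, head, List.map_congr_left tail]

theorem inversionCount_finRange {n : ℕ} (σ : Equiv.Perm (Fin n)) :
    inversionCount σ (List.finRange n) = inversions σ := by
  rw [inversionCount_eq_sum σ (List.pairwise_lt_finRange n), inversions, Finset.card_filter,
    Fintype.sum_prod_type, Fin.sum_univ_def]
  congr 1
  refine List.map_congr_left fun i _ => ?_
  rw [← Finset.card_filter]
  simp [List.countP_eq_length_filter,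
    ← List.toFinset_card_of_nodup ((List.nodup_finRange n).filter _)]

theorem inversions_inv {n : ℕ} (σ : Equiv.Perm (Fin n)) : inversions σ⁻¹ = inversions σ := by
  refine Finset.card_nbij' (fun p => (σ⁻¹ p.2, σ⁻¹ p.1)) (fun p => (σ p.2, σ p.1)) ?_ ?_ ?_ ?_ <;>
    intro p <;> simp +contextual

end InversionCount

section Reordering

variable {F R α β : Type*} [CommSemiring F] [Semiring R] [Algebra F R]

theorem smul_prod_map_eq_smul_prod_map_of_perm [LT α] [Preorder β] [DecidableLT β]
    {c d : F} (g : α → β) (f : α → R)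
    (hf : ∀ i j, i < j → g j < g i → QCommute c d (f i) (f j))
    {l m : List α} (hl : l.Pairwise (· < ·)) (hm : m.Pairwise (g · < g ·)) (hlm : l.Perm m) :
    c ^ inversionCount g l • (l.map f).prod = d ^ inversionCount g l • (m.map f).prod := by
  induction l generalizing m with
  | nil => simp [List.nil_perm.1 hlm, inversionCount]
  | cons x l ih =>
    obtain ⟨m₁, m₂, rfl⟩ := List.append_of_mem (hlm.subset List.mem_cons_self)
    rw [List.pairwise_cons] at hl
    have hperm : l.Perm (m₁ ++ m₂) := (hlm.trans List.perm_middle).cons_inv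
    obtain ⟨hm₁, hxm₂, hcross⟩ := List.pairwise_append.1 hm
    obtain ⟨above, hm₂⟩ := List.pairwise_cons.1 hxm₂
    have below : ∀ y ∈ m₁, g y < g x := fun y hy => hcross y hy x List.mem_cons_self
    have hcount : l.countP (fun y => g y < g x) = m₁.length := by
      rw [hperm.countP_eq, List.countP_append, List.countP_eq_length.2 (by simpa using below),
        List.countP_eq_zero.2 (by simpa using fun z hz => (above z hz).not_gt), add_zero]
    have hpass : c ^ m₁.length • (f x * (m₁.map f).prod)
        = d ^ m₁.length • ((m₁.map f).prod * f x) := by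
      have := QCommute.list_prod_right (l := m₁.map f) (by
        simpa using fun y hy => hf x y (hl.1 y (hperm.symm.subset (List.mem_append_left _ hy)))
          (below y hy))
      rwa [List.length_map] at this
    have hrest : c ^ inversionCount g l • (l.map f).prod
        = d ^ inversionCount g l • ((m₁ ++ m₂).map f).prod :=
      ih hl.2 (List.pairwise_append.2 ⟨hm₁, hm₂, fun a ha b hb => hcross a ha b
        (List.mem_cons_of_mem _ hb)⟩) hperm
    rw [List.map_append, List.prod_append] at hrest
    rw [inversionCount, hcount]
    calc c ^ (m₁.length + inversionCount g l) • (f x * (l.map f).prod)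
        = c ^ m₁.length • (f x * (c ^ inversionCount g l • (l.map f).prod)) := by
          rw [pow_add, mul_smul, mul_smul_comm]
      _ = d ^ inversionCount g l •
            (c ^ m₁.length • (f x * (m₁.map f).prod) * (m₂.map f).prod) := by
          rw [hrest, mul_smul_comm, smul_comm, ← mul_assoc, smul_mul_assoc]
      _ = d ^ (m₁.length + inversionCount g l) • ((m₁ ++ x :: m₂).map f).prod := by
          rw [hpass]
          simp only [List.map_append, List.map_cons, List.prod_append, List.prod_cons, pow_add,
            mul_smul, smul_mul_assoc, smul_comm (d ^ m₁.length), mul_assoc]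

theorem smul_prod_ofFn_eq_smul_prod_ofFn_inv {n : ℕ} {c d : F} (σ : Equiv.Perm (Fin n))
    (f : Fin n → R) (hf : ∀ i j, i < j → σ j < σ i → QCommute c d (f i) (f j)) :
    c ^ inversions σ • (List.ofFn f).prod =
      d ^ inversions σ • (List.ofFn fun j => f (σ⁻¹ j)).prod := by
  have hsorted : ((List.finRange n).map ⇑(σ⁻¹)).Pairwise (σ · < σ ·) := by
    simpa [List.pairwise_map] using List.pairwise_lt_finRange n
  rw [← inversionCount_finRange, List.ofFn_eq_map, List.ofFn_eq_map,
    show (fun j => f (σ⁻¹ j)) = f ∘ ⇑(σ⁻¹) from rfl, ← List.map_map]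
  exact smul_prod_map_eq_smul_prod_map_of_perm σ f hf (List.pairwise_lt_finRange n) hsorted
    (σ⁻¹.map_finRange_perm).symm

end Reordering

theorem rdet_eq_cdet_general {F : Type*} [Field F] (r s : F)
    {R : Type*} [Ring R] [Algebra F R] {n : ℕ} (a : Fin n → Fin n → R)
    (ha : IsQSemigroup r s a) :
    rdet r a = cdet s a := by
  obtain ⟨-, -, hswap, -⟩ := ha
  have hterm : ∀ σ : Equiv.Perm (Fin n),
      (-r) ^ inversions σ • (List.ofFn fun i => a i (σ i)).prod
        = (-s) ^ (-(inversions σ⁻¹ : ℤ)) • (List.ofFn fun j => a (σ⁻¹ j) j).prod := by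
    intro σ
    have h := smul_prod_ofFn_eq_smul_prod_ofFn_inv σ (fun i => a i (σ i))
      fun i j hij hσ => hswap i j (σ j) (σ i) hij hσ
    simp only [Equiv.Perm.coe_inv, Equiv.apply_symm_apply] at h ⊢
    rw [inversions_inv, neg_pow r, mul_smul, h, zpow_neg, zpow_natCast, ← inv_pow, inv_neg,
      neg_pow s⁻¹, mul_smul]
  rw [rdet, cdet, Finset.sum_congr rfl fun σ _ => hterm σ]
  exact Fintype.sum_equiv (Equiv.inv _) _ _ fun σ => rfl

/-- In the quantum semigroup `𝒜_{r,s}(n)` (equivalently, for any `F`-algebra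
`R` with elements `a_{ij}` satisfying its defining relations), the quantum row-determinant
equals the quantum column-determinant: `rdet_r(A) = cdet_{s⁻¹}(A)`. -/
theorem rdet_eq_cdet {F : Type*} [Field F] (r s : F) (hr : r ≠ 0) (hs : s ≠ 0)
    {R : Type*} [Ring R] [Algebra F R] {n : ℕ} (a : Fin n → Fin n → R)
    (ha : IsQSemigroup r s a) :
    rdet r a = cdet s a :=
  rdet_eq_cdet_general r s a ha
end

section
/- In the bialgebra 𝒜_{r,s}(n), the quantum row-determinant is a group-like element: Δ(rdet_r(A)) = rdet_r(A) ⊗ rdet_r(A) and ε(rdet_r(A)) = 1. -/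
open scoped TensorProduct Classical

/-!
Expanding `Δ` multiplicatively gives `Δ(rdet_r A) = Σ_f a_{1f(1)} ⋯ a_{nf(n)} ⊗ rdet_r(A ∘ f)`,
where `f` runs over all maps `Fin n → Fin n` and `A ∘ f` has rows `f(1), …, f(n)`. Pairing each
`σ` with `σ · (i i+1)` writes `rdet_r` as a sum of terms in which the quantum `2 × 2` minors of
two adjacent rows appear as factors. The relations of `𝒜_{r,s}(n)` kill these minors when the two
rows are equal and multiply them by `-r` when the rows are exchanged in increasing order. Hence
`rdet_r(A ∘ f) = 0` for non-injective `f` and `rdet_r(A ∘ τ) = (-r)^{l(τ)} rdet_r(A)` for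
permutations `τ`, and the sum collapses to `rdet_r A ⊗ rdet_r A`.
-/

open Equiv Finset

namespace Equiv.Perm

theorem exists_adjacent_descent {n : ℕ} {τ : Perm (Fin n)} (hτ : τ ≠ 1) :
    ∃ i j : Fin n, i.1 + 1 = j.1 ∧ τ j < τ i := by
  by_contra! h
  obtain _ | n := n
  · exact hτ (Subsingleton.elim _ _)
  have hmono : StrictMono τ := Fin.strictMono_iff_lt_succ.2 fun i =>
    (h i.castSucc i.succ rfl).lt_of_ne (τ.injective.ne Fin.castSucc_lt_succ.ne)
  exact hτ <| Equiv.ext fun x => congrArg (· x)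
    (Subsingleton.elim (hmono.orderIsoOfSurjective τ τ.surjective) (OrderIso.refl _))

theorem sum_eq_sum_lt_add_mul_swap {α M : Type*} [Fintype α] [LinearOrder α] [AddCommMonoid M]
    (h : Perm α → M) {i j : α} (hij : i ≠ j) :
    ∑ σ, h σ = ∑ σ with σ i < σ j, (h σ + h (σ * swap i j)) := by
  rw [sum_add_distrib, ← sum_filter_add_sum_filter_not univ fun σ : Perm α => σ i < σ j]
  congr 1
  refine sum_nbij' (· * swap i j) (· * swap i j) ?_ ?_ ?_ ?_ fun σ _ => by simp
  all_goals intro σ; simp only [mem_filter, mem_univ, true_and, not_lt, Perm.mul_apply,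
    swap_apply_left, swap_apply_right, mul_swap_mul_self, implies_true]
  exacts [fun h => h.lt_of_ne (σ.injective.ne hij.symm), le_of_lt]

end Equiv.Perm

theorem Fintype.sum_eq_sum_perm_of_not_injective {α M : Type*} [Fintype α] [DecidableEq α]
    [AddCommMonoid M] (h : (α → α) → M) (hh : ∀ f, ¬ Function.Injective f → h f = 0) :
    ∑ f, h f = ∑ σ : Perm α, h σ := by
  let coe : Perm α ↪ (α → α) := ⟨(⇑), DFunLike.coe_injective⟩
  calc ∑ f, h f = ∑ f ∈ univ.map coe, h f := by
        refine (Finset.sum_subset (subset_univ _) fun f _ hf => hh f fun hinj => hf ?_).symm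
        exact mem_map.2 ⟨.ofBijective f (Finite.injective_iff_bijective.1 hinj), mem_univ _, rfl⟩
    _ = ∑ σ : Perm α, h σ := sum_map _ _ _

theorem inversions_one {n : ℕ} : inversions (1 : Perm (Fin n)) = 0 :=
  card_eq_zero.2 (filter_eq_empty_iff.2 fun _ _ h => lt_asymm h.1 h.2)

theorem inversions_mul_swap {n : ℕ} (σ : Perm (Fin n)) {i j : Fin n} (hij : i.1 + 1 = j.1)
    (hσ : σ i < σ j) : inversions (σ * swap i j) = inversions σ + 1 := by
  -- as `i, j` are adjacent, `swap i j` preserves the order of every pair other than `{i, j}`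
  have hset : (univ.filter fun q : Fin n × Fin n => swap i j q.1 < swap i j q.2 ∧ σ q.2 < σ q.1) =
      insert (j, i) (univ.filter fun q : Fin n × Fin n => q.1 < q.2 ∧ σ q.2 < σ q.1) := by
    ext ⟨x, y⟩
    rw [mem_insert, mem_filter, mem_filter, swap_apply_def, swap_apply_def]
    simp only [mem_univ, true_and, Prod.mk.injEq]
    split_ifs <;> subst_vars <;> simp only [Fin.lt_def, ← Fin.val_inj] at * <;> grind
  have hcard : inversions (σ * swap i j) =
      #(univ.filter fun q : Fin n × Fin n => swap i j q.1 < swap i j q.2 ∧ σ q.2 < σ q.1) := by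
    unfold inversions
    exact card_equiv (prodCongr (swap i j) (swap i j)) fun p => by
      rw [mem_filter, mem_filter]
      simp [Perm.mul_apply]
  rw [hcard, hset, card_insert_of_notMem]
  · rfl
  · simp only [mem_filter, Fin.lt_def]
    omega

theorem List.exists_prod_ofFn_eq_mul_mul {M : Type*} [Monoid M] {n : ℕ} {i j : Fin n}
    (hij : i.1 + 1 = j.1) (g : Fin n → M) :
    ∃ P S : M, ∀ g' : Fin n → M, (∀ m, m ≠ i → m ≠ j → g' m = g m) →
      (List.ofFn g').prod = P * (g' i * g' j) * S := by
  refine ⟨((List.ofFn g).take i).prod, ((List.ofFn g).drop (j + 1)).prod, fun g' hg' => ?_⟩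
  have hsplit : List.ofFn g' =
      (List.ofFn g).take i ++ [g' i, g' j] ++ (List.ofFn g).drop (j + 1) := by
    refine List.ext_getElem (by simp; omega) fun m _ _ => ?_
    simp only [List.getElem_append, List.getElem_ofFn, List.getElem_take, List.getElem_drop]
    grind
  rw [hsplit, List.prod_append, List.prod_append]
  simp [mul_assoc]

theorem List.prod_ofFn_sum {R ι : Type*} [Semiring R] [Fintype ι] {m : ℕ}
    (c : Fin m → ι → R) :
    (List.ofFn fun i => ∑ k, c i k).prod =
      ∑ f : Fin m → ι, (List.ofFn fun i => c i (f i)).prod := by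
  induction m with
  | zero => simp
  | succ m ih =>
    rw [List.ofFn_succ, List.prod_cons, ih, sum_mul_sum, ← (Fin.consEquiv _).sum_comp,
      Fintype.sum_prod_type]
    simp [Fin.consEquiv, List.ofFn_succ]

theorem Algebra.TensorProduct.prod_ofFn_tmul {K A B : Type*} [CommSemiring K] [Semiring A]
    [Algebra K A] [Semiring B] [Algebra K B] {n : ℕ} (x : Fin n → A) (y : Fin n → B) :
    (List.ofFn fun i => x i ⊗ₜ[K] y i).prod = (List.ofFn x).prod ⊗ₜ (List.ofFn y).prod := by
  induction n with
  | zero => simp [one_def]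
  | succ n ih => simp [List.ofFn_succ, ih]

section RowDeterminant

variable {F : Type*} [Field F] {R : Type*} [Ring R] [Algebra F R] (r : F) {n : ℕ}

def qminor (b : Fin n → Fin n → R) (i j k l : Fin n) : R :=
  b i k * b j l - r • (b i l * b j k)

theorem map_rdet {S : Type*} [Ring S] [Algebra F S] (φ : R →ₐ[F] S) (a : Fin n → Fin n → R) :
    φ (rdet r a) = rdet r fun i j => φ (a i j) := by
  simp [rdet, map_list_prod, List.map_ofFn, Function.comp_def]

theorem rdet_one : rdet r (1 : Matrix (Fin n) (Fin n) F) = 1 := by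
  unfold rdet
  rw [sum_eq_single_of_mem 1 (mem_univ _)]
  · simp [inversions_one, Matrix.one_apply]
  intro σ _ hσ
  obtain ⟨i, hi⟩ : ∃ i, σ i ≠ i := by simpa [Equiv.ext_iff] using hσ
  rw [List.prod_ofFn, prod_eq_zero (mem_univ i) (by simp [hi.symm]), smul_zero]

theorem rdet_sum_tmul {A B : Type*} [Ring A] [Algebra F A] [Ring B] [Algebra F B]
    (x : Fin n → Fin n → A) (y : Fin n → Fin n → B) :
    rdet r (fun i j => ∑ k, x i k ⊗ₜ[F] y k j) =
      ∑ f : Fin n → Fin n, (List.ofFn fun i => x i (f i)).prod ⊗ₜ[F] rdet r (y ∘ f) := by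
  simp only [rdet, List.prod_ofFn_sum, Algebra.TensorProduct.prod_ofFn_tmul, smul_sum,
    TensorProduct.tmul_sum, TensorProduct.tmul_smul, Function.comp_apply]
  exact sum_comm

/-- Grouping `σ` with `σ * swap i j` writes `rdet r b` as a sum of terms
`P * qminor r b i j (σ i) (σ j) * S` in which `P` and `S` only involve the rows other than
`i` and `j`. -/
theorem rdet_eq_smul_of_qminor_eq_smul (b b' : Fin n → Fin n → R) (c : F) {i j : Fin n}
    (hij : i.1 + 1 = j.1) (hrows : ∀ m, m ≠ i → m ≠ j → b' m = b m)
    (hminor : ∀ k l, k < l → qminor r b' i j k l = c • qminor r b i j k l) :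
    rdet r b' = c • rdet r b := by
  have hne : i ≠ j := by rintro rfl; omega
  have pair : ∀ σ : Perm (Fin n), σ i < σ j → ∃ P S : R, ∀ d : Fin n → Fin n → R,
      (∀ m, m ≠ i → m ≠ j → d m = b m) →
      (-r) ^ inversions σ • (List.ofFn fun m => d m (σ m)).prod +
        (-r) ^ inversions (σ * swap i j) • (List.ofFn fun m => d m ((σ * swap i j) m)).prod =
      (-r) ^ inversions σ • (P * qminor r d i j (σ i) (σ j) * S) := by
    intro σ hσ
    obtain ⟨P, S, hPS⟩ := List.exists_prod_ofFn_eq_mul_mul hij fun m => b m (σ m)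
    refine ⟨P, S, fun d hd => ?_⟩
    rw [hPS (fun m => d m (σ m)) fun m hi hj => by simp [hd m hi hj],
      hPS (fun m => d m ((σ * swap i j) m)) fun m hi hj => by
        simp [swap_apply_of_ne_of_ne hi hj, hd m hi hj],
      inversions_mul_swap σ hij hσ]
    simp only [qminor, Perm.mul_apply, swap_apply_left, swap_apply_right, pow_succ, mul_sub,
      sub_mul, mul_smul_comm, smul_mul_assoc]
    module
  unfold rdet
  rw [Perm.sum_eq_sum_lt_add_mul_swap _ hne, Perm.sum_eq_sum_lt_add_mul_swap _ hne, smul_sum]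
  refine sum_congr rfl fun σ hσ => ?_
  replace hσ := (mem_filter.1 hσ).2
  obtain ⟨P, S, h⟩ := pair σ hσ
  rw [h b' hrows, h b fun _ _ _ => rfl, hminor _ _ hσ, smul_comm, mul_smul_comm, smul_mul_assoc]

end RowDeterminant

section QuantumSemigroup

variable {F : Type*} [Field F] {R : Type*} [Ring R] [Algebra F R] {r s : F} {n : ℕ}
  {a : Fin n → Fin n → R}

theorem IsQSemigroup.qminor_self (ha : IsQSemigroup r s a) (x : Fin n) {k l : Fin n}
    (hkl : k < l) : qminor r a x x k l = 0 :=
  sub_eq_zero.2 (ha.1 x k l hkl)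

theorem IsQSemigroup.qminor_swap (hs : s ≠ 0) (ha : IsQSemigroup r s a) {x y k l : Fin n}
    (hxy : x < y) (hkl : k < l) : qminor r a y x k l = -r • qminor r a x y k l := by
  obtain ⟨-, -, h3, h4⟩ := ha
  have hyx : a y k * a x l = (s * r) • (a x l * a y k) := by
    rw [mul_smul, h3 x y k l hxy hkl, smul_smul, mul_inv_cancel₀ hs, one_smul]
  have hlk : a y l * a x k = a x k * a y l - (r - s) • (a x l * a y k) := by
    rw [← h4 x y k l hxy hkl]; abel
  rw [qminor, qminor, hyx, hlk]
  module

theorem rdet_comp_eq_zero_of_adjacent (ha : IsQSemigroup r s a) {f : Fin n → Fin n}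
    {i j : Fin n} (hij : i.1 + 1 = j.1) (hf : f i = f j) : rdet r (a ∘ f) = 0 := by
  simpa using rdet_eq_smul_of_qminor_eq_smul r (a ∘ f) (a ∘ f) 0 hij (fun _ _ _ => rfl)
    fun k l hkl => by simpa [qminor, hf] using ha.qminor_self (f j) hkl

theorem rdet_comp_swap (hs : s ≠ 0) (ha : IsQSemigroup r s a) {f : Fin n → Fin n}
    {i j : Fin n} (hij : i.1 + 1 = j.1) (hf : f i < f j) :
    rdet r (a ∘ f ∘ swap i j) = -r • rdet r (a ∘ f) := by
  refine rdet_eq_smul_of_qminor_eq_smul r _ _ _ hij (fun m hi hj => ?_) fun k l hkl => ?_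
  · simp [swap_apply_of_ne_of_ne hi hj]
  · simpa [qminor] using ha.qminor_swap hs hf hkl

theorem rdet_comp_perm (hs : s ≠ 0) (ha : IsQSemigroup r s a) (τ : Perm (Fin n)) :
    rdet r (a ∘ τ) = (-r) ^ inversions τ • rdet r a := by
  obtain rfl | hτ := eq_or_ne τ 1
  · simp [inversions_one]
  obtain ⟨i, j, hij, hji⟩ := Perm.exists_adjacent_descent hτ
  have hlt : (τ * swap i j) i < (τ * swap i j) j := by simpa using hji
  have hinv : inversions τ = inversions (τ * swap i j) + 1 := by
    rw [← inversions_mul_swap (τ * swap i j) hij hlt, mul_swap_mul_self]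
  calc rdet r (a ∘ τ) = rdet r (a ∘ ⇑(τ * swap i j) ∘ swap i j) := by
        rw [← Perm.coe_mul, mul_swap_mul_self]
    _ = (-r) ^ inversions τ • rdet r a := by
        rw [rdet_comp_swap hs ha hij hlt, rdet_comp_perm hs ha (τ * swap i j), smul_smul, hinv,
          pow_succ']
termination_by inversions τ
decreasing_by omega

theorem rdet_comp_swap_eq_zero_iff (hr : r ≠ 0) (hs : s ≠ 0) (ha : IsQSemigroup r s a)
    (f : Fin n → Fin n) {i j : Fin n} (hij : i.1 + 1 = j.1) :
    rdet r (a ∘ f ∘ swap i j) = 0 ↔ rdet r (a ∘ f) = 0 := by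
  have hlt : ∀ g : Fin n → Fin n, g i < g j →
      (rdet r (a ∘ g ∘ swap i j) = 0 ↔ rdet r (a ∘ g) = 0) := fun g hg => by
    rw [rdet_comp_swap hs ha hij hg, smul_eq_zero, or_iff_right (neg_ne_zero.2 hr)]
  rcases lt_trichotomy (f i) (f j) with hf | hf | hf
  · exact hlt f hf
  · have hfix : f ∘ swap i j = f := funext fun m => by
      rw [Function.comp_apply, swap_apply_def]; split_ifs <;> simp_all
    rw [hfix]
  · have hfix : (f ∘ swap i j) ∘ swap i j = f := funext fun m => by simp [swap_apply_self]
    have := hlt (f ∘ swap i j) (by simpa using hf)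
    rwa [hfix, iff_comm] at this

theorem rdet_comp_perm_eq_zero_iff (hr : r ≠ 0) (hs : s ≠ 0) (ha : IsQSemigroup r s a)
    (f : Fin n → Fin n) (π : Perm (Fin n)) :
    rdet r (a ∘ f ∘ π) = 0 ↔ rdet r (a ∘ f) = 0 := by
  obtain _ | n := n
  · rw [Subsingleton.elim π 1, Perm.coe_one, Function.comp_id]
  have hπ : π ∈ Submonoid.closure (Set.range fun i : Fin n => swap i.castSucc i.succ) := by
    simp [Perm.mclosure_swap_castSucc_succ]
  induction hπ using Submonoid.closure_induction generalizing f with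
  | mem _ h =>
    obtain ⟨i, rfl⟩ := h
    exact rdet_comp_swap_eq_zero_iff hr hs ha f rfl
  | one => rfl
  | mul π₁ π₂ _ _ h₁ h₂ =>
    rw [Perm.coe_mul]
    exact (h₂ (f ∘ π₁)).trans (h₁ f)

theorem rdet_comp_eq_zero (hr : r ≠ 0) (hs : s ≠ 0) (ha : IsQSemigroup r s a)
    {f : Fin n → Fin n} (hf : ¬ Function.Injective f) : rdet r (a ∘ f) = 0 := by
  obtain ⟨p, q, hfpq, hpq⟩ := Function.not_injective_iff.1 hf
  wlog hlt : p < q generalizing p q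
  · exact this q p hfpq.symm hpq.symm (hpq.lt_or_gt.resolve_left hlt)
  let p' : Fin n := ⟨p + 1, by omega⟩
  have hpp' : p ≠ p' := by simp [p', Fin.ext_iff]
  rw [← rdet_comp_perm_eq_zero_iff hr hs ha f (swap p' q)]
  exact rdet_comp_eq_zero_of_adjacent ha (i := p) (j := p') rfl
    (by simp [swap_apply_of_ne_of_ne hpp' hpq, hfpq])

end QuantumSemigroup

/-- In the bialgebra `𝒜_{r,s}(n)`, with comultiplication
`Δ(a_{ij}) = Σ_k a_{ik} ⊗ a_{kj}` and counit `ε(a_{ij}) = δ_{ij}`, the quantum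
row-determinant is group-like: `Δ(rdet_r(A)) = rdet_r(A) ⊗ rdet_r(A)` and
`ε(rdet_r(A)) = 1`. -/
theorem rdet_isGroupLike {F : Type*} [Field F] (r s : F) (hr : r ≠ 0) (hs : s ≠ 0)
    {R : Type*} [Ring R] [Algebra F R] {n : ℕ} (a : Fin n → Fin n → R)
    (ha : IsQSemigroup r s a)
    (Δ : R →ₐ[F] R ⊗[F] R) (hΔ : ∀ i j : Fin n, Δ (a i j) = ∑ k : Fin n, a i k ⊗ₜ[F] a k j)
    (ε : R →ₐ[F] F) (hε : ∀ i j : Fin n, ε (a i j) = if i = j then 1 else 0) :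
    Δ (rdet r a) = rdet r a ⊗ₜ[F] rdet r a ∧ ε (rdet r a) = 1 := by
  constructor
  · rw [map_rdet]
    simp only [hΔ]
    rw [rdet_sum_tmul, Fintype.sum_eq_sum_perm_of_not_injective _ fun f hf => by
      rw [rdet_comp_eq_zero hr hs ha hf, TensorProduct.tmul_zero]]
    simp only [rdet_comp_perm hs ha, TensorProduct.tmul_smul, TensorProduct.smul_tmul',
      ← TensorProduct.sum_tmul]
    rfl
  · have hε' : (fun i j => ε (a i j)) = (1 : Matrix (Fin n) (Fin n) F) := by
      ext i j
      rw [hε, Matrix.one_apply]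
    rw [map_rdet, hε', rdet_one]
end

section
/- In the algebra 𝒜_{r,s}(n) ⊗ Λ(n) ⊗ Λ′(n), set ω_i = Σ_{j=1}^n a_{ji}·x_i·y_j and ω′_i = Σ_{j=1}^n a_{ij}·x_j·y_i for 1 ≤ i ≤ n. Then ω_i·ω_i = 0 and ω_j·ω_i = (r·s⁻¹)·ω_i·ω_j for all 1 ≤ i < j ≤ n, and likewise ω′_i·ω′_i = 0 and ω′_j·ω′_i = (r·s⁻¹)·ω′_i·ω′_j for all 1 ≤ i < j ≤ n. -/
open scoped TensorProduct Classical

/-- Relations of the quantum exterior algebra: `x_i x_i = 0` and `x_j x_i = -r x_i x_j` for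
`i < j`. -/
inductive ExtRel (F : Type*) [Field F] (r : F) (n : ℕ) :
    FreeAlgebra F (Fin n) → FreeAlgebra F (Fin n) → Prop
  | sq (i : Fin n) : ExtRel F r n (FreeAlgebra.ι F i * FreeAlgebra.ι F i) 0
  | swap (i j : Fin n) (h : i < j) :
      ExtRel F r n (FreeAlgebra.ι F j * FreeAlgebra.ι F i)
        ((-r) • (FreeAlgebra.ι F i * FreeAlgebra.ι F j))

/-- The quantum exterior algebra `Λ(n)` (for parameter `r`); taking the parameter `s⁻¹`
yields `Λ′(n)`. -/
abbrev QExt (F : Type*) [Field F] (r : F) (n : ℕ) := RingQuot (ExtRel F r n)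

/-- The generators `x_i` of the quantum exterior algebra. -/
noncomputable def qext (F : Type*) [Field F] (r : F) {n : ℕ} (i : Fin n) : QExt F r n :=
  RingQuot.mkAlgHom F (ExtRel F r n) (FreeAlgebra.ι F i)

/-! Expanding the products and moving the exterior generators into increasing order gives
`(r s⁻¹) ω_i ω_j - ω_j ω_i = Σ_{k,l} c_{kl} ⊗ x_i x_j ⊗ y_k y_l`. Pairing the terms `(k, l)` and
`(l, k)` through `y_l y_k = -s⁻¹ y_k y_l` (and `y_k² = 0` on the diagonal), the sum vanishes as
soon as `c_{kl} = s⁻¹ c_{lk}` for `k < l`, and this follows from the last two defining relations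
of `𝒜_{r,s}(n)`. For `ω′` the roles of the `x`'s and the `y`'s are exchanged. The squares vanish
already because `x_i² = 0`, resp. `y_i² = 0`. -/

structure IsQExterior {F ι A : Type*} [Field F] [LT ι] [Ring A] [Algebra F A] (q : F)
    (x : ι → A) : Prop where
  mul_self : ∀ i, x i * x i = 0
  mul_of_lt : ∀ {i j}, i < j → x j * x i = -(q • (x i * x j))

theorem isQExterior_qext {F : Type*} [Field F] (q : F) (n : ℕ) :
    IsQExterior q (qext F q : Fin n → QExt F q n) where
  mul_self i := by simpa [qext] using RingQuot.mkAlgHom_rel F (ExtRel.sq (F := F) (r := q) i)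
  mul_of_lt h := by
    simpa [qext] using RingQuot.mkAlgHom_rel F (ExtRel.swap (F := F) (r := q) _ _ h)

theorem Finset.sum_sum_eq_zero_of_add_swap {ι M : Type*} [Fintype ι] [LinearOrder ι]
    [AddCommMonoid M] {f : ι → ι → M} (hdiag : ∀ k, f k k = 0)
    (hswap : ∀ k l, k < l → f k l + f l k = 0) : ∑ k, ∑ l, f k l = 0 := by
  rw [← Finset.sum_product']
  refine Finset.sum_involution (fun p _ => p.swap) ?_ ?_ (fun _ _ => Finset.mem_univ _)
    (fun p _ => p.swap_swap)
  · rintro ⟨k, l⟩ -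
    rcases lt_trichotomy k l with h | rfl | h
    · exact hswap k l h
    · simp [hdiag]
    · rw [add_comm]; exact hswap l k h
  · rintro ⟨k, l⟩ - hne heq
    obtain rfl : l = k := congrArg Prod.fst heq
    exact hne (hdiag l)

theorem IsQExterior.sum_sum_tmul_mul_eq_zero {F ι M A : Type*} [Field F] [Fintype ι]
    [LinearOrder ι] [AddCommGroup M] [Module F M] [Ring A] [Algebra F A] {q : F} {y : ι → A}
    (hy : IsQExterior q y) {c : ι → ι → M} (hc : ∀ k l, k < l → c k l = q • c l k) :
    ∑ k, ∑ l, c k l ⊗ₜ[F] (y k * y l) = 0 := by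
  refine Finset.sum_sum_eq_zero_of_add_swap (fun k => by simp [hy.mul_self]) fun k l hkl => ?_
  rw [hy.mul_of_lt hkl, TensorProduct.tmul_neg, TensorProduct.tmul_smul,
    TensorProduct.smul_tmul', ← sub_eq_add_neg, ← TensorProduct.sub_tmul, hc k l hkl, sub_self,
    TensorProduct.zero_tmul]

namespace IsQSemigroup

variable {F R : Type*} [Field F] [Ring R] [Algebra F R] {r s : F} {n : ℕ}
  {a : Fin n → Fin n → R}

/-- `c_{kl} = s⁻¹ c_{lk}` for the coefficients of `smul_omega_mul_omega_sub_eq_sum`, whose row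
indices `k < l` are called `i < j` here and whose column indices `i < j` are called `k < l`. -/
theorem omega_coeff_symm (ha : IsQSemigroup r s a) (hs : s ≠ 0) {i j k l : Fin n}
    (hij : i < j) (hkl : k < l) :
    (r * s⁻¹) • (a i k * a j l) + r • (a i l * a j k) =
      s⁻¹ • ((r * s⁻¹) • (a j k * a i l) + r • (a j l * a i k)) := by
  have h3 := ha.2.2.1 i j k l hij hkl
  have h4 := ha.2.2.2 i j k l hij hkl
  linear_combination (norm := skip) (r * s⁻¹) • h4 + (r * s⁻¹) • h3
  match_scalars <;> field_simp <;> ring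

/-- `c_{kl} = r c_{lk}` for the coefficients of `smul_omega'_mul_omega'_sub_eq_sum`. -/
theorem omega'_coeff_symm (ha : IsQSemigroup r s a) (hs : s ≠ 0) {i j k l : Fin n}
    (hij : i < j) (hkl : k < l) :
    (r * s⁻¹) • (a i k * a j l) + s⁻¹ • (a j k * a i l) =
      r • ((r * s⁻¹) • (a i l * a j k) + s⁻¹ • (a j l * a i k)) := by
  have h3 := ha.2.2.1 i j k l hij hkl
  have h4 := ha.2.2.2 i j k l hij hkl
  linear_combination (norm := skip) (r * s⁻¹) • h4 - h3
  match_scalars <;> field_simp <;> ring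

end IsQSemigroup

section Omega

open TensorProduct Algebra.TensorProduct

variable {F R A B : Type*} [Field F] [Ring R] [Algebra F R] [Ring A] [Algebra F A] [Ring B]
  [Algebra F B] {n : ℕ} (a : Fin n → Fin n → R) (x : Fin n → A) (y : Fin n → B)

variable (F) in
def omega (i : Fin n) : (R ⊗[F] A) ⊗[F] B := ∑ k, (a k i ⊗ₜ[F] x i) ⊗ₜ[F] y k

variable (F) in
def omega' (i : Fin n) : (R ⊗[F] A) ⊗[F] B := ∑ k, (a i k ⊗ₜ[F] x k) ⊗ₜ[F] y i

theorem omega_mul_self {i : Fin n} (hx : x i * x i = 0) :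
    omega F a x y i * omega F a x y i = 0 := by
  simp [omega, Finset.sum_mul_sum, tmul_mul_tmul, hx]

theorem omega'_mul_self {i : Fin n} (hy : y i * y i = 0) :
    omega' F a x y i * omega' F a x y i = 0 := by
  simp [omega', Finset.sum_mul_sum, tmul_mul_tmul, hy]

theorem smul_omega_mul_omega_sub_eq_sum {p q : F} {i j : Fin n}
    (hx : x j * x i = -(p • (x i * x j))) :
    (p * q) • (omega F a x y i * omega F a x y j) - omega F a x y j * omega F a x y i =
      ∑ k, ∑ l, ((((p * q) • (a k i * a l j) + p • (a k j * a l i)) ⊗ₜ[F]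
        (x i * x j)) ⊗ₜ[F] (y k * y l)) := by
  simp only [omega, Finset.sum_mul_sum, Finset.smul_sum, ← Finset.sum_sub_distrib,
    tmul_mul_tmul, hx]
  simp only [add_tmul, sub_eq_add_neg, tmul_neg, neg_tmul, neg_neg, tmul_smul, smul_tmul']

theorem smul_omega'_mul_omega'_sub_eq_sum {p q : F} {i j : Fin n}
    (hy : y j * y i = -(q • (y i * y j))) :
    (p * q) • (omega' F a x y i * omega' F a x y j) - omega' F a x y j * omega' F a x y i =
      (∑ k, ∑ l, ((p * q) • (a i k * a j l) + q • (a j k * a i l)) ⊗ₜ[F] (x k * x l)) ⊗ₜ[F]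
        (y i * y j) := by
  simp only [omega', Finset.sum_mul_sum, Finset.smul_sum, ← Finset.sum_sub_distrib,
    tmul_mul_tmul, hy, sum_tmul]
  simp only [add_tmul, sub_eq_add_neg, tmul_neg, neg_neg, tmul_smul, smul_tmul']

variable {r s : F}

theorem omega_mul_omega_of_lt (ha : IsQSemigroup r s a) (hs : s ≠ 0) (hx : IsQExterior r x)
    (hy : IsQExterior s⁻¹ y) {i j : Fin n} (hij : i < j) :
    omega F a x y j * omega F a x y i = (r * s⁻¹) • (omega F a x y i * omega F a x y j) := by
  rw [eq_comm, ← sub_eq_zero, smul_omega_mul_omega_sub_eq_sum a x y (hx.mul_of_lt hij)]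
  refine hy.sum_sum_tmul_mul_eq_zero fun k l hkl => ?_
  rw [smul_tmul', ha.omega_coeff_symm hs hkl hij]

theorem omega'_mul_omega'_of_lt (ha : IsQSemigroup r s a) (hs : s ≠ 0) (hx : IsQExterior r x)
    (hy : IsQExterior s⁻¹ y) {i j : Fin n} (hij : i < j) :
    omega' F a x y j * omega' F a x y i = (r * s⁻¹) • (omega' F a x y i * omega' F a x y j) := by
  rw [eq_comm, ← sub_eq_zero, smul_omega'_mul_omega'_sub_eq_sum a x y (hy.mul_of_lt hij),
    hx.sum_sum_tmul_mul_eq_zero fun k l hkl => ha.omega'_coeff_symm hs hij hkl, zero_tmul]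

end Omega

theorem omega_relations_general {F : Type*} [Field F] (r s : F) (hs : s ≠ 0)
    {R : Type*} [Ring R] [Algebra F R] {n : ℕ} (a : Fin n → Fin n → R)
    (ha : IsQSemigroup r s a) :
    (∀ i : Fin n,
      (∑ j : Fin n, (a j i ⊗ₜ[F] qext F r i) ⊗ₜ[F] qext F s⁻¹ j) *
        (∑ j : Fin n, (a j i ⊗ₜ[F] qext F r i) ⊗ₜ[F] qext F s⁻¹ j)
        = (0 : (R ⊗[F] QExt F r n) ⊗[F] QExt F s⁻¹ n)) ∧
    (∀ i j : Fin n, i < j →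
      (∑ k : Fin n, (a k j ⊗ₜ[F] qext F r j) ⊗ₜ[F] qext F s⁻¹ k) *
        (∑ k : Fin n, (a k i ⊗ₜ[F] qext F r i) ⊗ₜ[F] qext F s⁻¹ k)
        = (r * s⁻¹) • ((∑ k : Fin n, (a k i ⊗ₜ[F] qext F r i) ⊗ₜ[F] qext F s⁻¹ k) *
            (∑ k : Fin n, (a k j ⊗ₜ[F] qext F r j) ⊗ₜ[F] qext F s⁻¹ k))) ∧
    (∀ i : Fin n,
      (∑ j : Fin n, (a i j ⊗ₜ[F] qext F r j) ⊗ₜ[F] qext F s⁻¹ i) *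
        (∑ j : Fin n, (a i j ⊗ₜ[F] qext F r j) ⊗ₜ[F] qext F s⁻¹ i)
        = (0 : (R ⊗[F] QExt F r n) ⊗[F] QExt F s⁻¹ n)) ∧
    (∀ i j : Fin n, i < j →
      (∑ k : Fin n, (a j k ⊗ₜ[F] qext F r k) ⊗ₜ[F] qext F s⁻¹ j) *
        (∑ k : Fin n, (a i k ⊗ₜ[F] qext F r k) ⊗ₜ[F] qext F s⁻¹ i)
        = (r * s⁻¹) • ((∑ k : Fin n, (a i k ⊗ₜ[F] qext F r k) ⊗ₜ[F] qext F s⁻¹ i) *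
            (∑ k : Fin n, (a j k ⊗ₜ[F] qext F r k) ⊗ₜ[F] qext F s⁻¹ j))) := by
  have hx := isQExterior_qext r n
  have hy := isQExterior_qext s⁻¹ n
  exact ⟨fun i => omega_mul_self a _ _ (hx.mul_self i),
    fun i j hij => omega_mul_omega_of_lt a _ _ ha hs hx hy hij,
    fun i => omega'_mul_self a _ _ (hy.mul_self i),
    fun i j hij => omega'_mul_omega'_of_lt a _ _ ha hs hx hy hij⟩

/-- In `𝒜_{r,s}(n) ⊗ Λ(n) ⊗ Λ′(n)`, the elements
`ω_i = Σ_j a_{ji}·x_i·y_j` and `ω′_i = Σ_j a_{ij}·x_j·y_i` satisfy `ω_i² = 0`,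
`ω_j ω_i = (rs⁻¹) ω_i ω_j` for `i < j`, and likewise for `ω′`. -/
theorem omega_relations {F : Type*} [Field F] (r s : F) (hr : r ≠ 0) (hs : s ≠ 0)
    {R : Type*} [Ring R] [Algebra F R] {n : ℕ} (a : Fin n → Fin n → R)
    (ha : IsQSemigroup r s a) :
    (∀ i : Fin n,
      (∑ j : Fin n, (a j i ⊗ₜ[F] qext F r i) ⊗ₜ[F] qext F s⁻¹ j) *
        (∑ j : Fin n, (a j i ⊗ₜ[F] qext F r i) ⊗ₜ[F] qext F s⁻¹ j)
        = (0 : (R ⊗[F] QExt F r n) ⊗[F] QExt F s⁻¹ n)) ∧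
    (∀ i j : Fin n, i < j →
      (∑ k : Fin n, (a k j ⊗ₜ[F] qext F r j) ⊗ₜ[F] qext F s⁻¹ k) *
        (∑ k : Fin n, (a k i ⊗ₜ[F] qext F r i) ⊗ₜ[F] qext F s⁻¹ k)
        = (r * s⁻¹) • ((∑ k : Fin n, (a k i ⊗ₜ[F] qext F r i) ⊗ₜ[F] qext F s⁻¹ k) *
            (∑ k : Fin n, (a k j ⊗ₜ[F] qext F r j) ⊗ₜ[F] qext F s⁻¹ k))) ∧
    (∀ i : Fin n,
      (∑ j : Fin n, (a i j ⊗ₜ[F] qext F r j) ⊗ₜ[F] qext F s⁻¹ i) *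
        (∑ j : Fin n, (a i j ⊗ₜ[F] qext F r j) ⊗ₜ[F] qext F s⁻¹ i)
        = (0 : (R ⊗[F] QExt F r n) ⊗[F] QExt F s⁻¹ n)) ∧
    (∀ i j : Fin n, i < j →
      (∑ k : Fin n, (a j k ⊗ₜ[F] qext F r k) ⊗ₜ[F] qext F s⁻¹ j) *
        (∑ k : Fin n, (a i k ⊗ₜ[F] qext F r k) ⊗ₜ[F] qext F s⁻¹ i)
        = (r * s⁻¹) • ((∑ k : Fin n, (a i k ⊗ₜ[F] qext F r k) ⊗ₜ[F] qext F s⁻¹ i) *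
            (∑ k : Fin n, (a j k ⊗ₜ[F] qext F r k) ⊗ₜ[F] qext F s⁻¹ j))) :=
  omega_relations_general r s hs a ha
end

section
/- Laplace expansion for the quantum row-determinant: in 𝒜_{r,s}(n), let (i_1,…,i_n) be a permutation of (1,…,n) with i_1 < ⋯ < i_t and i_{t+1} < ⋯ < i_n. Then rdet_r(A) = Σ (−r)^{(j_1+⋯+j_t)−(i_1+⋯+i_t)} · rdet_r(A^{i_1…i_t}_{j_1…j_t}) · rdet_r(A^{i_{t+1}…i_n}_{j_{t+1}…j_n}), where the sum is over all pairs of increasing sequences j_1 < ⋯ < j_t and j_{t+1} < ⋯ < j_n which together form a permutation of (1,…,n). -/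
open scoped TensorProduct Classical

/-
Write an element of the quantum exterior algebra on `e_1, …, e_n`, with `e_l e_k = -r e_k e_l`
for `k < l`, as `∑_S v(S) e_S` over subsets `S` (`e_S` the increasing product) and encode it by
`v : Finset (Fin n) → R`. Left multiplication by the row vector `x_i = ∑_k a_{ik} e_k` is
`rowMul r a i`, and `x_{i_1} ⋯ x_{i_t} = ∑_S rdet_r(A^{i_1…i_t}_S) e_S` (`rowMinors_eq_rdet`).
The relations of `𝒜_{r,s}(n)` give `x_j x_i = -r x_i x_j` for `i < j`, so
`x_T x_{Tᶜ} = (-r)^{c(T, Tᶜ)} x_1 ⋯ x_n = (-r)^{c(T, Tᶜ)} rdet_r(A) e_{[n]}`, where `c(P, Q)`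
counts the pairs `p ∈ P`, `q ∈ Q` with `q < p`. Expanding `x_T x_{Tᶜ}` with
`e_S e_{Sᶜ} = (-r)^{c(S, Sᶜ)} e_{[n]}` gives the Laplace expansion, and
`c(S, Sᶜ) = ∑_{j ∈ S} j - (0 + 1 + ⋯ + (|S| - 1))` turns the signs into the stated ones.
-/

open Finset

namespace QuantumLaplace

section Order

variable {α : Type*} [LinearOrder α]

def countLt (S : Finset α) (k : α) : ℕ := #(S.filter (· < k))

def crossings (P Q : Finset α) : ℕ := ∑ p ∈ P, countLt Q p

lemma countLt_eq_zero {S : Finset α} {k : α} (h : ∀ b ∈ S, k ≤ b) : countLt S k = 0 := by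
  simpa [countLt, filter_eq_empty_iff] using h

lemma countLt_erase_of_le (S : Finset α) {k l : α} (h : k ≤ l) :
    countLt (S.erase l) k = countLt S k := by
  rw [countLt, filter_erase, erase_eq_of_notMem (by simp [h])]
  rfl

lemma countLt_erase_add_one {S : Finset α} {k l : α} (hk : k ∈ S) (h : k < l) :
    countLt (S.erase k) l + 1 = countLt S l := by
  rw [countLt, filter_erase, card_erase_add_one (by simpa using ⟨hk, h⟩)]
  rfl

lemma countLt_union {P Q : Finset α} (h : Disjoint P Q) (k : α) :
    countLt (P ∪ Q) k = countLt P k + countLt Q k := by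
  rw [countLt, filter_union, card_union_of_disjoint (disjoint_filter_filter h)]
  rfl

lemma countLt_insert_self (S : Finset α) (k : α) : countLt (insert k S) k = countLt S k := by
  rw [countLt, filter_insert, if_neg (lt_irrefl k)]
  rfl

lemma crossings_insert {P : Finset α} (Q : Finset α) {p : α} (hp : p ∉ P) :
    crossings (insert p P) Q = countLt Q p + crossings P Q :=
  sum_insert hp

lemma countLt_add_crossings_erase_sdiff {S S₁ : Finset α} {k : α} (hS₁ : S₁ ⊆ S.erase k) :
    countLt S k + crossings S₁ (S.erase k \ S₁) =
      crossings (insert k S₁) (S.erase k \ S₁) + countLt (insert k S₁) k := by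
  have hkS₁ : k ∉ S₁ := fun h => notMem_erase k S (hS₁ h)
  have hsplit : countLt S k = countLt S₁ k + countLt (S.erase k \ S₁) k := by
    rw [← countLt_erase_of_le S le_rfl, ← countLt_union disjoint_sdiff, union_sdiff_of_subset hS₁]
  rw [hsplit, crossings_insert _ hkS₁, countLt_insert_self]
  ring

lemma countLt_orderEmbOfFin {S : Finset α} {m : ℕ} (hS : #S = m) (k : Fin m) :
    countLt S (S.orderEmbOfFin hS k) = k := by
  set f := S.orderEmbOfFin hS
  have hS' : S = univ.map f.toEmbedding := (map_orderEmbOfFin_univ S hS).symm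
  have himg : S.filter (· < f k) = (Iio k).map f.toEmbedding := by
    nth_rewrite 1 [hS']
    ext x
    simp only [mem_filter, mem_map, mem_univ, true_and, mem_Iio]
    constructor
    · rintro ⟨⟨j, -, rfl⟩, hj⟩
      exact ⟨j, f.lt_iff_lt.1 hj, rfl⟩
    · rintro ⟨j, hj, rfl⟩
      exact ⟨⟨j, rfl⟩, f.lt_iff_lt.2 hj⟩
  rw [countLt, himg, card_map, Fin.card_Iio]

lemma orderEmbOfFin_erase {S : Finset α} {m : ℕ} (hS : #S = m + 1) (k : Fin (m + 1))
    (h : #(S.erase (S.orderEmbOfFin hS k)) = m) (j : Fin m) :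
    (S.erase (S.orderEmbOfFin hS k)).orderEmbOfFin h j = S.orderEmbOfFin hS (k.succAbove j) := by
  refine congrFun (orderEmbOfFin_unique h (fun j => ?_)
    ((S.orderEmbOfFin hS).strictMono.comp (Fin.strictMono_succAbove k))) j |>.symm
  simp [Fin.succAbove_ne k j]

lemma countLt_univ {n : ℕ} (k : Fin n) : countLt univ k = k := by
  rw [countLt, ← Fin.card_Iio]
  congr 1
  ext
  simp

lemma sum_countLt_self (S : Finset α) : ∑ p ∈ S, countLt S p = ∑ k ∈ range #S, k := by
  induction S using Finset.induction_on_max with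
  | empty => simp
  | insert a S ha ih =>
    have ha' : a ∉ S := fun h => lt_irrefl a (ha a h)
    rw [sum_insert ha', card_insert_of_notMem ha', sum_range_succ, countLt_insert_self, add_comm]
    congr 1
    · refine (sum_congr rfl fun p hp => ?_).trans ih
      rw [countLt, filter_insert, if_neg (not_lt.2 (ha p hp).le)]
      rfl
    · rw [countLt, filter_true_of_mem fun b hb => ha b hb]

lemma crossings_compl_add_sum_range {n : ℕ} (S : Finset (Fin n)) :
    crossings S Sᶜ + ∑ k ∈ range #S, k = ∑ j ∈ S, (j : ℕ) := by
  rw [← sum_countLt_self, crossings, ← sum_add_distrib]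
  refine sum_congr rfl fun p _ => ?_
  rw [add_comm, ← countLt_union disjoint_compl_right, union_compl, countLt_univ]

end Order

section Sums

variable {α M : Type*} [DecidableEq α]

lemma sum_sum_erase_eq_zero [AddCommGroup M] (S : Finset α) {g : α → α → M}
    (hg : ∀ k ∈ S, ∀ l ∈ S, k ≠ l → g k l + g l k = 0) :
    ∑ k ∈ S, ∑ l ∈ S.erase k, g k l = 0 := by
  rw [sum_sigma']
  refine sum_involution (fun p _ => ⟨p.2, p.1⟩) (fun ⟨k, l⟩ hp => ?_) (fun ⟨k, l⟩ hp _ h => ?_)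
    (fun ⟨k, l⟩ hp => ?_) (fun _ _ => rfl) <;>
    simp only [mem_sigma, mem_erase] at hp
  · exact hg k hp.1 l hp.2.2 (Ne.symm hp.2.1)
  · exact hp.2.1 (congrArg Sigma.fst h)
  · simpa only [mem_sigma, mem_erase] using ⟨hp.2.2, Ne.symm hp.2.1, hp.1⟩

lemma sum_powerset_sum_mem [AddCommMonoid M] (S : Finset α) (f : Finset α → α → M) :
    ∑ S₁ ∈ S.powerset, ∑ k ∈ S₁, f S₁ k =
      ∑ k ∈ S, ∑ S₁ ∈ (S.erase k).powerset, f (insert k S₁) k := by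
  rw [sum_sigma', sum_sigma']
  refine sum_bij' (fun p _ => ⟨p.2, p.1.erase p.2⟩) (fun q _ => ⟨insert q.1 q.2, q.1⟩)
    (fun ⟨S₁, k⟩ hp => ?_) (fun ⟨k, S₁⟩ hq => ?_) (fun ⟨S₁, k⟩ hp => ?_) (fun ⟨k, S₁⟩ hq => ?_)
    (fun ⟨S₁, k⟩ hp => ?_) <;>
    simp only [mem_sigma, mem_powerset] at *
  · exact ⟨hp.1 hp.2, erase_subset_erase k hp.1⟩
  · exact ⟨insert_subset hq.1 (hq.2.trans (erase_subset _ _)), mem_insert_self _ _⟩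
  · rw [insert_erase hp.2]
  · rw [erase_insert fun h => notMem_erase k S (hq.2 h)]
  · rw [insert_erase hp.2]

end Sums

section Permutations

variable {F : Type*} [Field F] {R : Type*} [Ring R] [Algebra F R] {m : ℕ}

def permCons (k : Fin (m + 1)) (τ : Equiv.Perm (Fin m)) : Equiv.Perm (Fin (m + 1)) :=
  ((finSuccEquiv' 0).trans (Equiv.optionCongr τ)).trans (finSuccEquiv' k).symm

@[simp]
lemma permCons_zero (k : Fin (m + 1)) (τ : Equiv.Perm (Fin m)) : permCons k τ 0 = k := by
  simp [permCons, finSuccEquiv'_at]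

@[simp]
lemma permCons_succ (k : Fin (m + 1)) (τ : Equiv.Perm (Fin m)) (j : Fin m) :
    permCons k τ j.succ = k.succAbove (τ j) := by
  have h : finSuccEquiv' (0 : Fin (m + 1)) j.succ = some j := by
    rw [← Fin.succAbove_zero_apply, finSuccEquiv'_succAbove]
  simp [permCons, h]

lemma permCons_bijective :
    Function.Bijective fun p : Fin (m + 1) × Equiv.Perm (Fin m) => permCons p.1 p.2 := by
  rw [Fintype.bijective_iff_injective_and_card]
  refine ⟨fun ⟨k, τ⟩ ⟨k', τ'⟩ h => ?_, by simp [Fintype.card_perm, Nat.factorial_succ]⟩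
  have hk : k = k' := by simpa using congrArg (· 0) h
  subst hk
  have hτ : τ = τ' := Equiv.ext fun j => Fin.succAbove_right_injective (p := k) <| by
    simpa using congrArg (· j.succ) h
  rw [hτ]

lemma inversions_succ (σ : Equiv.Perm (Fin (m + 1))) :
    inversions σ = #{j : Fin m | σ j.succ < σ 0} +
      #{p : Fin m × Fin m | p.1 < p.2 ∧ σ p.2.succ < σ p.1.succ} := by
  simp only [inversions, card_filter, Fintype.sum_prod_type, Fin.sum_univ_succ, lt_irrefl,
    Fin.succ_pos, Fin.succ_lt_succ_iff, not_lt_zero]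
  simp

lemma inversions_permCons (k : Fin (m + 1)) (τ : Equiv.Perm (Fin m)) :
    inversions (permCons k τ) = k + inversions τ := by
  simp only [inversions_succ, permCons_zero, permCons_succ, Fin.succAbove_lt_iff_castSucc_lt,
    Fin.succAbove_lt_succAbove_iff]
  congr 1
  calc #{j : Fin m | (τ j).castSucc < k}
      = #{z : Fin m | z.castSucc < k} := card_equiv τ (by simp)
    _ = k := by
      simp only [Fin.lt_def, Fin.val_castSucc]
      rw [Fin.card_filter_val_lt]
      omega

lemma rdet_zero (r : F) (b : Fin 0 → Fin 0 → R) : rdet r b = 1 := by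
  simp [rdet, inversions]

lemma rdet_succ (r : F) (b : Fin (m + 1) → Fin (m + 1) → R) :
    rdet r b =
      ∑ k : Fin (m + 1), (-r) ^ (k : ℕ) • (b 0 k * rdet r fun p q => b p.succ (k.succAbove q)) := by
  rw [rdet, ← Fintype.sum_bijective _ permCons_bijective _ _ fun _ => rfl, Fintype.sum_prod_type]
  refine sum_congr rfl fun k _ => ?_
  rw [rdet, mul_sum, smul_sum]
  refine sum_congr rfl fun τ _ => ?_
  rw [inversions_permCons, pow_add, mul_smul_comm, smul_smul, List.ofFn_succ, List.prod_cons]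
  simp

end Permutations

section Exterior

variable {F : Type*} [Field F] {R : Type*} [Ring R] [Algebra F R] {ι α : Type*} [LinearOrder α]

def rowMul (r : F) (a : ι → α → R) (i : ι) (v : Finset α → R) : Finset α → R :=
  fun S => ∑ k ∈ S, (-r) ^ countLt S k • (a i k * v (S.erase k))

def rowsMul (r : F) (a : ι → α → R) (L : List ι) (v : Finset α → R) : Finset α → R :=
  L.foldr (rowMul r a) v

def rowMinors (r : F) (a : ι → α → R) (L : List ι) : Finset α → R :=
  rowsMul r a L (Pi.single ∅ 1)

@[simp]
lemma rowsMul_cons (r : F) (a : ι → α → R) (i : ι) (L : List ι) (v : Finset α → R) :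
    rowsMul r a (i :: L) v = rowMul r a i (rowsMul r a L v) := rfl

lemma rowMul_smul (r : F) (a : ι → α → R) (i : ι) (c : F) (v : Finset α → R) :
    rowMul r a i (c • v) = c • rowMul r a i v := by
  funext S
  simp only [rowMul, Pi.smul_apply, smul_sum, mul_smul_comm, smul_comm c]

lemma rowMul_rowMul_apply (r : F) (a : ι → α → R) (i j : ι) (v : Finset α → R) (S : Finset α) :
    rowMul r a i (rowMul r a j v) S =
      ∑ k ∈ S, ∑ l ∈ S.erase k, (-r) ^ (countLt S k + countLt (S.erase k) l) •
        (a i k * (a j l * v ((S.erase k).erase l))) := by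
  refine sum_congr rfl fun k _ => ?_
  rw [rowMul, mul_sum, smul_sum]
  refine sum_congr rfl fun l _ => ?_
  rw [mul_smul_comm, smul_smul, ← pow_add]

end Exterior

section Relations

variable {F : Type*} [Field F] {R : Type*} [Ring R] [Algebra F R] {n : ℕ} {r s : F}
  {a : Fin n → Fin n → R}

-- The coefficient of `e_k e_l` in `x_j x_i + r x_i x_j`.
lemma _root_.IsQSemigroup.cross_relation (hs : s ≠ 0) (ha : IsQSemigroup r s a) {i j k l : Fin n}
    (hij : i < j) (hkl : k < l) :
    a j k * a i l - r • (a j l * a i k) + r • (a i k * a j l) - (r * r) • (a i l * a j k) = 0 := by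
  obtain ⟨-, -, h₃, h₄⟩ := ha
  have e₃ : a j k * a i l = (s * r) • (a i l * a j k) := by
    rw [mul_smul, h₃ i j k l hij hkl, smul_smul, mul_inv_cancel₀ hs, one_smul]
  linear_combination (norm := module) e₃ + r • h₄ i j k l hij hkl

lemma rowMul_rowMul_of_lt (hs : s ≠ 0) (ha : IsQSemigroup r s a) {i j : Fin n} (hij : i < j)
    (v : Finset (Fin n) → R) :
    rowMul r a j (rowMul r a i v) = (-r) • rowMul r a i (rowMul r a j v) := by
  funext S
  suffices rowMul r a j (rowMul r a i v) S + r • rowMul r a i (rowMul r a j v) S = 0 by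
    rw [Pi.smul_apply, neg_smul, eq_neg_of_add_eq_zero_left this]
  rw [rowMul_rowMul_apply, rowMul_rowMul_apply, smul_sum, ← sum_add_distrib]
  simp_rw [smul_sum, ← sum_add_distrib]
  refine sum_sum_erase_eq_zero S fun k hk l hl hne => ?_
  wlog hkl : k < l generalizing k l
  · rw [add_comm]
    exact this l hl k hk hne.symm (hne.lt_or_gt.resolve_left hkl)
  have hexp : countLt S l + countLt (S.erase l) k = countLt S k + countLt (S.erase k) l + 1 := by
    rw [countLt_erase_of_le S hkl.le, ← countLt_erase_add_one hk hkl]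
    ring
  have hrel := congrArg (· * v ((S.erase k).erase l)) (ha.cross_relation hs hij hkl)
  simp only [sub_mul, add_mul, smul_mul_assoc, zero_mul, mul_assoc] at hrel
  rw [hexp, erase_right_comm (a := l)]
  linear_combination (norm := module) (-r) ^ (countLt S k + countLt (S.erase k) l) • hrel

end Relations

section Sorting

variable {F : Type*} [Field F] {R : Type*} [Ring R] [Algebra F R] {n : ℕ} {r s : F}
  {a : Fin n → Fin n → R}

lemma rowsMul_cons_sort (hs : s ≠ 0) (ha : IsQSemigroup r s a) (v : Finset (Fin n) → R)
    (Q : Finset (Fin n)) {i : Fin n} (hi : i ∉ Q) :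
    rowsMul r a (i :: Q.sort) v = (-r) ^ countLt Q i • rowsMul r a (insert i Q).sort v := by
  induction Q using Finset.induction_on_min generalizing i with
  | empty => simp [countLt]
  | insert q Q hq ih =>
    have hqQ : q ∉ Q := fun h => lt_irrefl q (hq q h)
    have hiQ : i ∉ Q := fun h => hi (mem_insert_of_mem h)
    have hsort : (insert q Q).sort = q :: Q.sort := sort_insert _ (fun b hb => (hq b hb).le) hqQ
    rcases lt_or_gt_of_ne (fun h : i = q => hi (h ▸ mem_insert_self q Q)) with hiq | hqi
    · have hmin : ∀ b ∈ insert q Q, i ≤ b := by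
        simpa using ⟨hiq.le, fun b hb => (hiq.trans (hq b hb)).le⟩
      rw [countLt_eq_zero hmin, pow_zero, one_smul, sort_insert _ hmin hi]
    · have hcount : countLt (insert q Q) i = countLt Q i + 1 := by
        simpa [erase_insert hqQ] using (countLt_erase_add_one (mem_insert_self q Q) hqi).symm
      have hsort' : (insert i (insert q Q)).sort = q :: (insert i Q).sort := by
        rw [insert_comm]
        refine sort_insert _ (fun b hb => ?_) (by simp [hqi.ne, hqQ])
        rcases mem_insert.1 hb with rfl | hb
        exacts [hqi.le, (hq b hb).le]
      rw [hsort, rowsMul_cons, rowsMul_cons, rowMul_rowMul_of_lt hs ha hqi, ← rowsMul_cons r a i,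
        ih hiQ, rowMul_smul, smul_smul, hcount, pow_succ', hsort', rowsMul_cons]

lemma rowsMul_sort_append_sort (hs : s ≠ 0) (ha : IsQSemigroup r s a) (v : Finset (Fin n) → R)
    {P Q : Finset (Fin n)} (hPQ : Disjoint P Q) :
    rowsMul r a (P.sort ++ Q.sort) v = (-r) ^ crossings P Q • rowsMul r a (P ∪ Q).sort v := by
  induction P using Finset.induction_on_min with
  | empty => simp [crossings, rowsMul]
  | insert p P hp ih =>
    have hpP : p ∉ P := fun h => lt_irrefl p (hp p h)
    rw [disjoint_insert_left] at hPQ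
    have hpPQ : p ∉ P ∪ Q := by simp [hpP, hPQ.1]
    have hcount : countLt (P ∪ Q) p = countLt Q p := by
      rw [countLt_union hPQ.2, countLt_eq_zero fun b hb => (hp b hb).le, zero_add]
    calc rowsMul r a ((insert p P).sort ++ Q.sort) v
        = rowMul r a p (rowsMul r a (P.sort ++ Q.sort) v) := by
          rw [sort_insert _ (fun b hb => (hp b hb).le) hpP, List.cons_append, rowsMul_cons]
      _ = (-r) ^ crossings P Q • rowsMul r a (p :: (P ∪ Q).sort) v := by
          rw [ih hPQ.2, rowMul_smul, rowsMul_cons]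
      _ = (-r) ^ crossings (insert p P) Q • rowsMul r a (insert p P ∪ Q).sort v := by
          rw [rowsMul_cons_sort hs ha v _ hpPQ, smul_smul, ← pow_add, hcount,
            crossings_insert Q hpP, insert_union, add_comm]

end Sorting

section Minors

variable {F : Type*} [Field F] {R : Type*} [Ring R] [Algebra F R] {ι α : Type*} [LinearOrder α]
  (r : F) (a : ι → α → R)

@[simp]
lemma rowMinors_nil : rowMinors r a [] = Pi.single ∅ 1 := rfl

lemma rowMinors_cons_apply (i : ι) (L : List ι) (S : Finset α) :
    rowMinors r a (i :: L) S =
      ∑ k ∈ S, (-r) ^ countLt S k • (a i k * rowMinors r a L (S.erase k)) := rfl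

lemma rowMinors_eq_zero_of_card_ne {L : List ι} {S : Finset α} (h : #S ≠ L.length) :
    rowMinors r a L S = 0 := by
  induction L generalizing S with
  | nil => exact Pi.single_eq_of_ne (by simpa using h) _
  | cons i L ih =>
    refine (rowMinors_cons_apply r a i L S).trans (sum_eq_zero fun k hk => ?_)
    have hk' : #(S.erase k) ≠ L.length := by
      rw [card_erase_of_mem hk]
      have := card_pos.2 ⟨k, hk⟩
      simp only [List.length_cons] at h
      omega
    rw [ih hk', mul_zero, smul_zero]

lemma rowMinors_append (L₁ L₂ : List ι) (S : Finset α) :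
    rowMinors r a (L₁ ++ L₂) S = ∑ S₁ ∈ S.powerset,
      (-r) ^ crossings S₁ (S \ S₁) • (rowMinors r a L₁ S₁ * rowMinors r a L₂ (S \ S₁)) := by
  induction L₁ generalizing S with
  | nil =>
    rw [sum_eq_single_of_mem ∅ (empty_mem_powerset S) fun S₁ _ h => by
      rw [rowMinors_nil, Pi.single_eq_of_ne h, zero_mul, smul_zero]]
    simp [crossings]
  | cons i L₁ ih =>
    calc rowMinors r a (i :: L₁ ++ L₂) S
        = ∑ k ∈ S, ∑ S₁ ∈ (S.erase k).powerset,
            (-r) ^ (countLt S k + crossings S₁ (S.erase k \ S₁)) •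
              (a i k * (rowMinors r a L₁ S₁ * rowMinors r a L₂ (S.erase k \ S₁))) := by
          rw [List.cons_append, rowMinors_cons_apply]
          refine sum_congr rfl fun k _ => ?_
          rw [ih, mul_sum, smul_sum]
          refine sum_congr rfl fun S₁ _ => ?_
          rw [mul_smul_comm, smul_smul, ← pow_add]
      _ = ∑ S₁ ∈ S.powerset, ∑ k ∈ S₁, (-r) ^ (crossings S₁ (S \ S₁) + countLt S₁ k) •
            (a i k * (rowMinors r a L₁ (S₁.erase k) * rowMinors r a L₂ (S \ S₁))) := by
          rw [sum_powerset_sum_mem]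
          refine sum_congr rfl fun k _ => sum_congr rfl fun S₁ hS₁ => ?_
          rw [mem_powerset] at hS₁
          rw [countLt_add_crossings_erase_sdiff hS₁, sdiff_insert, ← erase_sdiff_comm,
            erase_insert fun h => notMem_erase k S (hS₁ h)]
      _ = _ := by
          refine sum_congr rfl fun S₁ _ => ?_
          rw [rowMinors_cons_apply, sum_mul, smul_sum]
          refine sum_congr rfl fun k _ => ?_
          rw [smul_mul_assoc, mul_assoc, smul_smul, ← pow_add]

lemma rowMinors_eq_rdet (L : List ι) (S : Finset α) (hS : #S = L.length) :
    rowMinors r a L S = rdet r fun p q => a (L.get p) (S.orderEmbOfFin hS q) := by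
  induction L generalizing S with
  | nil =>
    obtain rfl := card_eq_zero.1 hS
    rw [rdet_zero, rowMinors_nil, Pi.single_eq_same]
  | cons i L ih =>
    rw [rowMinors_cons_apply, rdet_succ, ← sum_coe_sort S,
      ← (S.orderIsoOfFin hS).toEquiv.sum_comp]
    refine sum_congr rfl fun k _ => ?_
    have hk : #(S.erase (S.orderEmbOfFin hS k)) = L.length := by
      rw [card_erase_of_mem (orderEmbOfFin_mem S hS k), hS]
      rfl
    change (-r) ^ countLt S (S.orderEmbOfFin hS k) • (a i (S.orderEmbOfFin hS k) *
      rowMinors r a L (S.erase (S.orderEmbOfFin hS k))) = _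
    simp only [countLt_orderEmbOfFin, ih _ hk, orderEmbOfFin_erase]
    rfl

lemma rowMinors_sort [LinearOrder ι] {T : Finset ι} {S : Finset α} {t : ℕ} (hT : #T = t)
    (hS : #S = t) :
    rowMinors r a T.sort S = rdet r fun p q => a (T.orderEmbOfFin hT p) (S.orderEmbOfFin hS q) := by
  have hlen : T.sort.length = t := (length_sort _).trans hT
  subst hlen
  exact rowMinors_eq_rdet r a _ S hS

end Minors

section Laplace

variable {F : Type*} [Field F] {R : Type*} [Ring R] [Algebra F R] {n : ℕ} {r s : F}
  {a : Fin n → Fin n → R}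

lemma orderEmbOfFin_univ_apply (h : #(univ : Finset (Fin n)) = n) (i : Fin n) :
    (univ : Finset (Fin n)).orderEmbOfFin h i = i :=
  (congrFun (orderEmbOfFin_unique h (fun _ => mem_univ _) strictMono_id) i).symm

lemma rdet_eq_rowMinors_univ (r : F) (a : Fin n → Fin n → R) :
    rdet r a = rowMinors r a (univ : Finset (Fin n)).sort univ := by
  simp only [rowMinors_sort r a (card_fin n) (card_fin n), orderEmbOfFin_univ_apply]

lemma pow_crossings_smul_rdet (hs : s ≠ 0) (ha : IsQSemigroup r s a) (T : Finset (Fin n)) :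
    (-r) ^ crossings T Tᶜ • rdet r a = ∑ S : Finset (Fin n),
      (-r) ^ crossings S Sᶜ • (rowMinors r a T.sort S * rowMinors r a Tᶜ.sort Sᶜ) := by
  have hsorted : rowMinors r a (T.sort ++ Tᶜ.sort) univ = (-r) ^ crossings T Tᶜ • rdet r a := by
    rw [rowMinors, rowsMul_sort_append_sort hs ha _ disjoint_compl_right, union_compl,
      rdet_eq_rowMinors_univ]
    rfl
  rw [← hsorted, rowMinors_append, powerset_univ]
  exact sum_congr rfl fun S _ => by rw [compl_eq_univ_sdiff S]

lemma inv_pow_crossings_mul_pow_crossings (hr : r ≠ 0) {S T : Finset (Fin n)} (h : #S = #T) :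
    ((-r) ^ crossings T Tᶜ)⁻¹ * (-r) ^ crossings S Sᶜ =
      (-r) ^ ((∑ j ∈ S, ((j : ℕ) : ℤ)) - ∑ i ∈ T, ((i : ℕ) : ℤ)) := by
  have hS := congrArg (Nat.cast : ℕ → ℤ) (crossings_compl_add_sum_range S)
  have hT := congrArg (Nat.cast : ℕ → ℤ) (crossings_compl_add_sum_range T)
  rw [h] at hS
  push_cast at hS hT
  rw [← zpow_natCast, ← zpow_natCast, ← zpow_neg, ← zpow_add₀ (neg_ne_zero.2 hr)]
  congr 1
  linarith

end Laplace

end QuantumLaplace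

/-- Laplace expansion of the quantum row-determinant. For a fixed
row set `T` of size `t` (rows `i_1 < ⋯ < i_t`; complementary rows `i_{t+1} < ⋯ < i_n`),
`rdet_r(A) = Σ (-r)^{(j_1+⋯+j_t)-(i_1+⋯+i_t)} rdet_r(A^{i_1…i_t}_{j_1…j_t})
rdet_r(A^{i_{t+1}…i_n}_{j_{t+1}…j_n})`, summed over all column sets `S` of size `t`. -/
theorem laplace_rdet {F : Type*} [Field F] (r s : F) (hr : r ≠ 0) (hs : s ≠ 0)
    {R : Type*} [Ring R] [Algebra F R] {n : ℕ} (a : Fin n → Fin n → R)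
    (ha : IsQSemigroup r s a) (t : ℕ) (T : Finset (Fin n)) (hT : T.card = t) :
    rdet r a =
      ∑ S : Finset (Fin n),
        if hS : S.card = t then
          ((-r) ^ ((∑ j ∈ S, ((j : ℕ) : ℤ)) - ∑ i ∈ T, ((i : ℕ) : ℤ))) •
            (rdet r (fun p q => a (T.orderEmbOfFin hT p) (S.orderEmbOfFin hS q)) *
              rdet r (fun p q =>
                a (Tᶜ.orderEmbOfFin (k := n - t)
                      (by rw [Finset.card_compl, Fintype.card_fin, hT]) p)
                  (Sᶜ.orderEmbOfFin (k := n - t)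
                      (by rw [Finset.card_compl, Fintype.card_fin, hS]) q)))
        else 0 := by
  rw [← inv_smul_smul₀ (pow_ne_zero _ (neg_ne_zero.2 hr)) (rdet r a),
    QuantumLaplace.pow_crossings_smul_rdet hs ha T, Finset.smul_sum]
  refine Finset.sum_congr rfl fun S _ => ?_
  split_ifs with hS
  · have hTc : Tᶜ.card = n - t := by rw [Finset.card_compl, Fintype.card_fin, hT]
    have hSc : Sᶜ.card = n - t := by rw [Finset.card_compl, Fintype.card_fin, hS]
    rw [QuantumLaplace.rowMinors_sort r a hT hS, QuantumLaplace.rowMinors_sort r a hTc hSc,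
      smul_smul, QuantumLaplace.inv_pow_crossings_mul_pow_crossings hr (hS.trans hT.symm)]
  · rw [QuantumLaplace.rowMinors_eq_zero_of_card_ne r a (by simpa [hT] using hS), zero_mul,
      smul_zero, smul_zero]
end

section
/- In the quantum coordinate ring 𝒜_{r,s}(2n), assume [n]_{s⁻⁴}! ≠ 0 in F. Let B′ = A 𝕁_r A^T, i.e. for i < j, b′_{ij} = Σ_{m=1}^n (a_{i,2m−1}·a_{j,2m} − r·a_{i,2m}·a_{j,2m−1}). Then Pf_{s⁻¹}(B′) = cdet_{s⁻¹}(A). -/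
open scoped TensorProduct Classical

/-!
Both sides are read off in the exterior algebra over `R` twisted by `q = -s⁻¹` (`QExterior`),
where `e_A e_B = q ^ crossings A B • e_{A ∪ B}`. The relations of `𝒜_{r,s}` say precisely that
the columns `ω_c = ∑_i a_{ic} e_i` satisfy `ω_l ω_k = q ω_k ω_l` for `k < l` and `ω_k² = 0`.
Hence the pair products `θ_m = ω_{2m-1} ω_{2m}` commute up to `q⁴ = s⁻⁴` and square to zero,
which gives the `q`-multinomial identity
`(∑_m θ_m)^n = [n]_{s⁻⁴}! θ_1 ⋯ θ_n = [n]_{s⁻⁴}! ω_1 ⋯ ω_{2n}`.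
A product of homogeneous elements expands over ordered decompositions of `{1, …, 2n}` into
blocks, weighted by `q` to the number of crossings between blocks. For `ω_1 ⋯ ω_{2n}` the blocks
are singletons, i.e. permutations, and the top coefficient is `cdet_{s⁻¹}(A)`; for
`(∑_m θ_m)^n`, whose factor has coefficients `b′_{ij}`, they are pairs, i.e. `σ ∈ Π′`, and the
top coefficient is the Pfaffian sum. In both cases the crossings count the inversions of `σ`.
-/

open Finset Function

lemma Fin.pairwise_cons_iff {α : Type*} {r : α → α → Prop} (hr : ∀ x y, r x y → r y x)
    {k : ℕ} {a : α} {f : Fin k → α} :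
    Pairwise (r on (Fin.cons a f : Fin (k + 1) → α)) ↔
      (∀ u, r a (f u)) ∧ Pairwise (r on f) := by
  refine ⟨fun h => ⟨fun u => h (Fin.succ_ne_zero u).symm,
    fun t u htu => h ((Fin.succ_injective _).ne htu)⟩, fun ⟨h0, h⟩ t u htu => ?_⟩
  cases t using Fin.cases <;> cases u using Fin.cases
  · exact absurd rfl htu
  · exact h0 _
  · exact hr _ _ (h0 _)
  · exact h (fun e => htu (congrArg _ e))

lemma Finset.exists_lt_and_eq_pair {α : Type*} [LinearOrder α] {s : Finset α} (h : #s = 2) :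
    ∃ a b, a < b ∧ s = {a, b} := by
  obtain ⟨a, b, hab, rfl⟩ := card_eq_two.1 h
  rcases hab.lt_or_gt with hab | hba
  · exact ⟨a, b, hab, rfl⟩
  · exact ⟨b, a, hba, pair_comm _ _⟩

lemma Finset.pair_eq_pair_of_lt {α : Type*} [LinearOrder α] {a b c d : α} (hab : a < b)
    (hcd : c < d) (h : ({a, b} : Finset α) = {c, d}) : a = c ∧ b = d := by
  have ha : a ∈ ({c, d} : Finset α) := h ▸ mem_insert_self a {b}
  have hb : b ∈ ({c, d} : Finset α) := h ▸ mem_insert_of_mem (mem_singleton_self b)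
  have hc : c ∈ ({a, b} : Finset α) := h ▸ mem_insert_self c {d}
  simp only [mem_insert, mem_singleton] at ha hb hc
  grind

section Crossings
variable {ι : Type*} [LinearOrder ι]

def crossings (A B : Finset ι) : ℕ := #{p ∈ A ×ˢ B | p.2 < p.1}

@[simp] lemma crossings_empty_left (B : Finset ι) : crossings ∅ B = 0 := by
  simp [crossings]

@[simp] lemma crossings_empty_right (A : Finset ι) : crossings A ∅ = 0 := by
  simp [crossings]

lemma crossings_singleton_singleton (i j : ι) :
    crossings {i} {j} = if j < i then 1 else 0 := by
  rw [crossings, singleton_product_singleton, filter_singleton]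
  split_ifs <;> rfl

lemma crossings_union_left {A B C : Finset ι} (h : Disjoint A B) :
    crossings (A ∪ B) C = crossings A C + crossings B C := by
  rw [crossings, union_product, filter_union, card_union_of_disjoint
    (disjoint_filter_filter (disjoint_product.2 (Or.inl h)))]
  rfl

lemma crossings_union_right {A B C : Finset ι} (h : Disjoint B C) :
    crossings A (B ∪ C) = crossings A B + crossings A C := by
  rw [crossings, product_union, filter_union, card_union_of_disjoint
    (disjoint_filter_filter (disjoint_product.2 (Or.inr h)))]
  rfl

lemma crossings_biUnion_right {κ : Type*} (A : Finset ι) (B : κ → Finset ι) (s : Finset κ)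
    (hB : (s : Set κ).PairwiseDisjoint B) :
    crossings A (s.biUnion B) = ∑ u ∈ s, crossings A (B u) := by
  induction s using Finset.induction_on with
  | empty => simp
  | insert t s hts ih =>
    rw [coe_insert, Set.pairwiseDisjoint_insert_of_notMem (by exact_mod_cast hts)] at hB
    rw [biUnion_insert, sum_insert hts, crossings_union_right
      ((disjoint_biUnion_right _ _ _).2 fun u hu => hB.2 u hu), ih hB.1]

/-- The cocycle identity behind the associativity of `QExterior`. -/
lemma crossings_add_crossings {A D S : Finset ι} (hAD : A ⊆ D) (hDS : D ⊆ S) :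
    crossings D (S \ D) + crossings A (D \ A)
      = crossings A (S \ A) + crossings (D \ A) (S \ D) := by
  have hD := crossings_union_left (C := S \ D) (disjoint_sdiff : Disjoint A (D \ A))
  rw [union_sdiff_of_subset hAD] at hD
  rw [← sdiff_union_sdiff_cancel hDS hAD,
    crossings_union_right (disjoint_sdiff.mono_left sdiff_subset).symm, hD]
  ring

end Crossings

/-- Coefficient functions `S ↦ x_S` of the elements `∑_S x_S e_S` of the exterior algebra
over `R` twisted by `q`: the `e_i` commute with `R`, and
`e_A e_B = q ^ crossings A B • e_{A ∪ B}` for disjoint `A`, `B`.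
For `q = -1` and commutative `R` this is the usual exterior algebra. -/
def QExterior {F : Type*} (_q : F) (ι R : Type*) : Type _ := Finset ι → R

namespace QExterior
variable {F : Type*} {q : F} {ι : Type*} {R : Type*} [Ring R]

instance : AddCommGroup (QExterior q ι R) := inferInstanceAs (AddCommGroup (Finset ι → R))

noncomputable instance : One (QExterior q ι R) := ⟨fun S => if S = ∅ then 1 else 0⟩

lemma one_apply (S : Finset ι) : (1 : QExterior q ι R) S = if S = ∅ then 1 else 0 := rfl

@[simp] lemma add_apply (x y : QExterior q ι R) (S) : (x + y) S = x S + y S := rfl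

@[simp] lemma zero_apply (S : Finset ι) : (0 : QExterior q ι R) S = 0 := rfl

lemma sum_apply {κ : Type*} (s : Finset κ) (x : κ → QExterior q ι R) (S : Finset ι) :
    (∑ k ∈ s, x k) S = ∑ k ∈ s, x k S :=
  Finset.sum_apply (M := fun _ => R) S s x

variable [CommRing F] [Algebra F R]

instance : Module F (QExterior q ι R) := inferInstanceAs (Module F (Finset ι → R))

@[simp] lemma smul_apply (c : F) (x : QExterior q ι R) (S) : (c • x) S = c • x S := rfl

variable [LinearOrder ι]

instance : Mul (QExterior q ι R) :=
  ⟨fun x y S => ∑ A ∈ S.powerset, q ^ crossings A (S \ A) • (x A * y (S \ A))⟩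

lemma mul_apply (x y : QExterior q ι R) (S : Finset ι) :
    (x * y) S = ∑ A ∈ S.powerset, q ^ crossings A (S \ A) • (x A * y (S \ A)) := rfl

noncomputable instance : Ring (QExterior q ι R) where
  __ := (inferInstance : AddCommGroup (QExterior q ι R))
  left_distrib x y z := by
    funext S
    simp only [mul_apply, add_apply, mul_add, smul_add, sum_add_distrib]
  right_distrib x y z := by
    funext S
    simp only [mul_apply, add_apply, add_mul, smul_add, sum_add_distrib]
  zero_mul x := by funext S; simp [mul_apply]
  mul_zero x := by funext S; simp [mul_apply]
  one_mul x := by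
    funext S
    rw [mul_apply, sum_eq_single ∅ (fun A _ hA => by simp [one_apply, hA]) (by simp)]
    simp [one_apply]
  mul_one x := by
    funext S
    rw [mul_apply, sum_eq_single S (fun A hA hAS => ?_) (by simp)]
    · simp [one_apply]
    · simp [one_apply, sdiff_eq_empty_iff_subset,
        ((mem_powerset.1 hA).ssubset_of_ne hAS).not_subset]
  mul_assoc x y z := by
    funext S
    simp only [mul_apply, sum_mul, mul_sum, smul_sum, smul_mul_assoc, mul_smul_comm, smul_smul,
      ← pow_add, mul_assoc]
    rw [sum_sigma', sum_sigma']
    -- match `A ⊆ D ⊆ S` on the left with `A ⊆ S`, `B ⊆ S \ A` on the right via `B = D \ A`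
    refine sum_bij' (fun p _ => ⟨p.2, p.1 \ p.2⟩) (fun p _ => ⟨p.1 ∪ p.2, p.1⟩)
      ?_ ?_ ?_ ?_ ?_
    · rintro ⟨D, A⟩ hp
      simp only [mem_sigma, mem_powerset] at hp ⊢
      exact ⟨hp.2.trans hp.1, sdiff_subset_sdiff hp.1 subset_rfl⟩
    · rintro ⟨A, B⟩ hp
      simp only [mem_sigma, mem_powerset] at hp ⊢
      exact ⟨union_subset hp.1 (hp.2.trans sdiff_subset), subset_union_left⟩
    · rintro ⟨D, A⟩ hp
      simp only [mem_sigma, mem_powerset] at hp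
      simp only [union_sdiff_of_subset hp.2]
    · rintro ⟨A, B⟩ hp
      simp only [mem_sigma, mem_powerset] at hp
      simp only [union_sdiff_cancel_left (disjoint_sdiff.mono_right hp.2)]
    · rintro ⟨D, A⟩ hp
      simp only [mem_sigma, mem_powerset] at hp
      dsimp only
      rw [sdiff_sdiff_sdiff_cancel_right hp.2, crossings_add_crossings hp.2 hp.1]

noncomputable instance : Algebra F (QExterior q ι R) :=
  Algebra.ofModule
    (fun c x y => funext fun S => by simp [mul_apply, smul_sum, smul_comm c])
    (fun c x y => funext fun S => by simp [mul_apply, smul_sum, smul_comm c])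

end QExterior

section Blocks
variable {ι : Type*} [LinearOrder ι] {k : ℕ}

def IsBlockDecomposition (A : Fin k → Finset ι) (S : Finset ι) : Prop :=
  Pairwise (Disjoint on A) ∧ univ.biUnion A = S

def blockCrossings (A : Fin k → Finset ι) : ℕ :=
  ∑ t, ∑ u, if t < u then crossings (A t) (A u) else 0

lemma isBlockDecomposition_zero_iff (A : Fin 0 → Finset ι) (S : Finset ι) :
    IsBlockDecomposition A S ↔ S = ∅ := by
  simp [IsBlockDecomposition, eq_comm]

lemma biUnion_cons (A₀ : Finset ι) (A : Fin k → Finset ι) :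
    univ.biUnion (Fin.cons A₀ A : Fin (k + 1) → Finset ι) = A₀ ∪ univ.biUnion A := by
  ext v
  simp [Fin.exists_fin_succ]

lemma isBlockDecomposition_cons_iff {A₀ : Finset ι} {A : Fin k → Finset ι}
    {S : Finset ι} :
    IsBlockDecomposition (Fin.cons A₀ A : Fin (k + 1) → Finset ι) S ↔
      A₀ ⊆ S ∧ IsBlockDecomposition A (S \ A₀) := by
  rw [IsBlockDecomposition, IsBlockDecomposition, Fin.pairwise_cons_iff fun _ _ h => h.symm,
    biUnion_cons]
  have hdisj : (∀ u, Disjoint A₀ (A u)) ↔ Disjoint A₀ (univ.biUnion A) := by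
    simp [disjoint_biUnion_right]
  rw [hdisj]
  constructor
  · rintro ⟨⟨h₀, hA⟩, rfl⟩
    exact ⟨subset_union_left, hA, (union_sdiff_cancel_left h₀).symm⟩
  · rintro ⟨hS, hA, hU⟩
    rw [hU]
    exact ⟨⟨disjoint_sdiff, hA⟩, union_sdiff_of_subset hS⟩

lemma blockCrossings_cons (A₀ : Finset ι) (A : Fin k → Finset ι) :
    blockCrossings (Fin.cons A₀ A : Fin (k + 1) → Finset ι)
      = ∑ u, crossings A₀ (A u) + blockCrossings A := by
  simp only [blockCrossings, Fin.sum_univ_succ, Fin.cons_zero, Fin.cons_succ,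
    Fin.succ_pos, Fin.succ_lt_succ_iff, if_true, if_false, Fin.not_lt_zero, zero_add]

lemma blockCrossings_cons_of_isBlockDecomposition {A₀ S : Finset ι}
    {A : Fin k → Finset ι} (hA : IsBlockDecomposition A (S \ A₀)) :
    blockCrossings (Fin.cons A₀ A : Fin (k + 1) → Finset ι)
      = crossings A₀ (S \ A₀) + blockCrossings A := by
  rw [blockCrossings_cons]
  congr 1
  rw [← hA.2, crossings_biUnion_right _ _ _ (hA.1.set_pairwise _)]

end Blocks

namespace QExterior
variable {F : Type*} [CommRing F] {q : F} {ι : Type*} [LinearOrder ι] {R : Type*} [Ring R]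
  [Algebra F R]

theorem prod_ofFn_apply [Fintype ι] :
    ∀ {k : ℕ} (x : Fin k → QExterior q ι R) (S : Finset ι),
    (List.ofFn x).prod S = ∑ A : Fin k → Finset ι,
      if IsBlockDecomposition A S then
        q ^ blockCrossings A • (List.ofFn fun t => x t (A t)).prod
      else 0
  | 0, x, S => by
    simp [one_apply, isBlockDecomposition_zero_iff, blockCrossings]
  | k + 1, x, S => by
    rw [← (Fin.consEquiv fun _ => Finset ι).sum_comp, Fintype.sum_prod_type,
      List.ofFn_succ, List.prod_cons, mul_apply, ← filter_subset_univ, sum_filter]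
    refine sum_congr rfl fun A₀ _ => ?_
    simp only [Fin.consEquiv, Equiv.coe_fn_mk, isBlockDecomposition_cons_iff]
    split_ifs with hA₀
    · rw [prod_ofFn_apply (fun t => x t.succ), mul_sum, smul_sum]
      refine sum_congr rfl fun A _ => ?_
      simp only [hA₀, true_and]
      split_ifs with hA
      · rw [blockCrossings_cons_of_isBlockDecomposition hA, List.ofFn_succ, List.prod_cons,
          mul_smul_comm, smul_smul, pow_add]
        rfl
      · rw [mul_zero, smul_zero]
    · simp [hA₀]

end QExterior

section ImageFiber
variable {ι : Type*} [LinearOrder ι] {k : ℕ}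

lemma crossings_image (σ : Equiv.Perm ι) (X Y : Finset ι) :
    crossings (X.image σ) (Y.image σ) = #{p ∈ X ×ˢ Y | σ p.2 < σ p.1} := by
  rw [crossings, ← prodMap_image_product, filter_image,
    card_image_of_injective _ (σ.injective.prodMap σ.injective)]
  rfl

lemma isBlockDecomposition_image_fiber [Fintype ι] (σ : Equiv.Perm ι) (β : ι → Fin k) :
    IsBlockDecomposition (fun t => ({p | β p = t} : Finset ι).image σ) univ := by
  refine ⟨fun t u htu => ?_, eq_univ_of_forall fun v => ?_⟩
  · rw [onFun, disjoint_image σ.injective, disjoint_filter]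
    exact fun p _ hp hq => htu (hp.symm.trans hq)
  · exact mem_biUnion.2 ⟨β (σ.symm v), mem_univ _, mem_image.2 ⟨σ.symm v, by simp⟩⟩

end ImageFiber

theorem blockCrossings_image_fiber {N k : ℕ} (σ : Equiv.Perm (Fin N)) {β : Fin N → Fin k}
    (hβ : Monotone β) (hσ : ∀ p p', p < p' → β p = β p' → σ p < σ p') :
    blockCrossings (fun t => ({p | β p = t} : Finset (Fin N)).image σ) = inversions σ := by
  have key : ∀ p p', (p < p' ∧ σ p' < σ p) ↔ (β p < β p' ∧ σ p' < σ p) := by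
    refine fun p p' => ⟨fun ⟨h, hσp⟩ => ⟨(hβ h.le).lt_of_ne fun e => ?_, hσp⟩,
      fun ⟨h, hσp⟩ => ⟨lt_of_not_ge fun h' => h.not_ge (hβ h'), hσp⟩⟩
    exact (hσ p p' h e).not_gt hσp
  calc blockCrossings (fun t => ({p | β p = t} : Finset (Fin N)).image σ)
      = ∑ t, ∑ p with β p = t, ∑ u, ∑ p' with β p' = u,
          if β p < β p' ∧ σ p' < σ p then 1 else 0 := by
        refine sum_congr rfl fun t _ => ?_
        rw [sum_comm]
        refine sum_congr rfl fun u _ => ?_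
        rw [crossings_image, card_filter, sum_product]
        split_ifs with htu
        · refine sum_congr rfl fun p hp => sum_congr rfl fun p' hp' => ?_
          rw [(mem_filter.1 hp).2, (mem_filter.1 hp').2]
          simp [htu]
        · refine (sum_eq_zero fun p hp => sum_eq_zero fun p' hp' => ?_).symm
          rw [(mem_filter.1 hp).2, (mem_filter.1 hp').2]
          simp [htu]
    _ = ∑ p, ∑ p', if p < p' ∧ σ p' < σ p then 1 else 0 := by
        rw [sum_fiberwise]
        simp only [sum_fiberwise, key]
    _ = inversions σ := by
        rw [inversions, card_filter, ← univ_product_univ, sum_product]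

lemma blockCrossings_singleton {N : ℕ} (σ : Equiv.Perm (Fin N)) :
    blockCrossings (fun t => ({σ t} : Finset (Fin N))) = inversions σ := by
  have h := blockCrossings_image_fiber σ (β := id) monotone_id fun p p' h e => absurd e h.ne
  simpa [filter_eq'] using h

lemma exists_perm_eq_singleton {N : ℕ} {A : Fin N → Finset (Fin N)} (hA : univ.biUnion A = univ)
    (hcard : ∀ t, #(A t) = 1) : ∃ σ : Equiv.Perm (Fin N), (fun t => {σ t}) = A := by
  choose v hv using fun t => card_eq_one.1 (hcard t)
  have hv_surj : Function.Surjective v := fun p => by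
    obtain ⟨t, -, ht⟩ := mem_biUnion.1 (hA ▸ mem_univ p)
    exact ⟨t, by simpa [hv t, eq_comm] using ht⟩
  exact ⟨Equiv.ofBijective v (Finite.surjective_iff_bijective.1 hv_surj),
    funext fun t => (hv t).symm⟩

section Pairs
variable {n : ℕ}

def pairIndex (p : Fin (2 * n)) : Fin n := ⟨p / 2, by omega⟩

lemma pL_lt_pR (t : Fin n) : pL t < pR t := Fin.lt_def.2 (by simp [pL, pR])

lemma pairIndex_eq_iff {p : Fin (2 * n)} {t : Fin n} :
    pairIndex p = t ↔ p = pL t ∨ p = pR t := by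
  simp only [pairIndex, pL, pR, Fin.ext_iff]
  omega

lemma pairIndex_pL (t : Fin n) : pairIndex (pL t) = t := pairIndex_eq_iff.2 (Or.inl rfl)

lemma pairIndex_pR (t : Fin n) : pairIndex (pR t) = t := pairIndex_eq_iff.2 (Or.inr rfl)

lemma exists_eq_pL_or_eq_pR (p : Fin (2 * n)) : ∃ t, p = pL t ∨ p = pR t :=
  ⟨_, pairIndex_eq_iff.1 rfl⟩

lemma pairIndex_monotone : Monotone (pairIndex : Fin (2 * n) → Fin n) :=
  fun _ _ h => Fin.le_def.2 (Nat.div_le_div_right (Fin.le_def.1 h))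

lemma filter_pairIndex_eq (t : Fin n) :
    ({p | pairIndex p = t} : Finset (Fin (2 * n))) = {pL t, pR t} := by
  ext p
  simp [pairIndex_eq_iff]

lemma blockCrossings_pair {σ : Equiv.Perm (Fin (2 * n))} (hσ : inPi' σ) :
    blockCrossings (fun t => ({σ (pL t), σ (pR t)} : Finset (Fin (2 * n)))) = inversions σ := by
  have h := blockCrossings_image_fiber σ pairIndex_monotone fun p p' hp e => by
    obtain ⟨t, ht⟩ : ∃ t, pairIndex p' = t := ⟨_, rfl⟩
    rcases pairIndex_eq_iff.1 (e.trans ht) with rfl | rfl <;>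
      rcases pairIndex_eq_iff.1 ht with rfl | rfl
    · exact absurd hp (lt_irrefl _)
    · exact hσ t
    · exact absurd hp (pL_lt_pR t).not_gt
    · exact absurd hp (lt_irrefl _)
  simpa [filter_pairIndex_eq] using h

lemma eq_of_inPi'_of_pair_eq {σ τ : Equiv.Perm (Fin (2 * n))} (hσ : inPi' σ) (hτ : inPi' τ)
    (h : ∀ t, ({σ (pL t), σ (pR t)} : Finset (Fin (2 * n))) = {τ (pL t), τ (pR t)}) :
    σ = τ := by
  have hpair t := Finset.pair_eq_pair_of_lt (hσ t) (hτ t) (h t)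
  refine Equiv.ext fun p => ?_
  obtain ⟨t, rfl | rfl⟩ := exists_eq_pL_or_eq_pR p
  exacts [(hpair t).1, (hpair t).2]

lemma exists_inPi'_eq_pair {A : Fin n → Finset (Fin (2 * n))} (hA : univ.biUnion A = univ)
    (hcard : ∀ t, #(A t) = 2) :
    ∃ σ : Equiv.Perm (Fin (2 * n)), inPi' σ ∧ (fun t => {σ (pL t), σ (pR t)}) = A := by
  choose c d hcd hcd_eq using fun t => exists_lt_and_eq_pair (hcard t)
  let f (p : Fin (2 * n)) := if p = pL (pairIndex p) then c (pairIndex p) else d (pairIndex p)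
  have hfL t : f (pL t) = c t := by simp [f, pairIndex_pL]
  have hfR t : f (pR t) = d t := by simp [f, pairIndex_pR, (pL_lt_pR t).ne']
  have hf_surj : Function.Surjective f := fun v => by
    obtain ⟨t, -, ht⟩ := mem_biUnion.1 (hA ▸ mem_univ v)
    rw [hcd_eq t, mem_insert, mem_singleton] at ht
    rcases ht with rfl | rfl
    exacts [⟨pL t, hfL t⟩, ⟨pR t, hfR t⟩]
  refine ⟨Equiv.ofBijective f (Finite.surjective_iff_bijective.1 hf_surj), fun t => ?_,
    funext fun t => ?_⟩
  · simp [hfL, hfR, hcd t]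
  · simp [hfL, hfR, hcd_eq t]

end Pairs

namespace QExterior
variable {F : Type*} [CommRing F] {q : F} {R : Type*} [Ring R] [Algebra F R]

lemma prod_ofFn_apply_of_card {ι : Type*} [LinearOrder ι] [Fintype ι] (d : ℕ) {k : ℕ}
    (x : Fin k → QExterior q ι R) (hx : ∀ t S, #S ≠ d → x t S = 0) (S : Finset ι) :
    (List.ofFn x).prod S = ∑ A : Fin k → Finset ι,
      if IsBlockDecomposition A S ∧ ∀ t, #(A t) = d then
        q ^ blockCrossings A • (List.ofFn fun t => x t (A t)).prod
      else 0 := by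
  rw [prod_ofFn_apply]
  refine sum_congr rfl fun A _ => ?_
  by_cases hA : ∀ t, #(A t) = d
  · simp only [hA, implies_true, and_true]
  · obtain ⟨t, ht⟩ := not_forall.1 hA
    rw [List.prod_eq_zero ((List.mem_ofFn' _ _).2 ⟨t, hx t _ ht⟩), smul_zero]
    simp [hA]

theorem prod_ofFn_apply_univ_of_card_eq_one {N : ℕ} (x : Fin N → QExterior q (Fin N) R)
    (hx : ∀ t S, #S ≠ 1 → x t S = 0) :
    (List.ofFn x).prod univ
      = ∑ σ : Equiv.Perm (Fin N),
          q ^ inversions σ • (List.ofFn fun t => x t {σ t}).prod := by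
  rw [prod_ofFn_apply_of_card 1 x hx, ← sum_filter]
  refine (sum_bij (fun σ _ t => {σ t}) (fun σ _ => ?_) (fun σ _ τ _ h => ?_) (fun A hA => ?_)
    (fun σ _ => by rw [blockCrossings_singleton])).symm
  · have h := isBlockDecomposition_image_fiber σ id
    simp only [id, filter_eq', mem_univ, if_true, image_singleton] at h
    simp [h]
  · exact Equiv.ext fun t => singleton_injective (congrFun h t)
  · obtain ⟨⟨-, hU⟩, hcard⟩ := (mem_filter.1 hA).2
    obtain ⟨σ, rfl⟩ := exists_perm_eq_singleton hU hcard
    exact ⟨σ, mem_univ _, rfl⟩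

end QExterior

namespace QExterior
variable {F : Type*} [Field F] {q : F} {R : Type*} [Ring R] [Algebra F R] {n : ℕ}

theorem pow_apply_univ_of_card_eq_two (x : QExterior q (Fin (2 * n)) R)
    (hx : ∀ S, #S ≠ 2 → x S = 0)
    (b : Fin (2 * n) → Fin (2 * n) → R) (hb : ∀ i j, i < j → x {i, j} = b i j) :
    (x ^ n) univ = hfSum q b := by
  rw [← List.prod_replicate, ← List.ofFn_const, prod_ofFn_apply_of_card 2 _ (fun _ => hx),
    ← sum_filter, hfSum, ← sum_filter]
  refine (sum_bij (fun σ _ t => {σ (pL t), σ (pR t)}) (fun σ hσ => ?_)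
    (fun σ hσ τ hτ h => ?_) (fun A hA => ?_) (fun σ hσ => ?_)).symm
  · have h := isBlockDecomposition_image_fiber σ pairIndex
    simp only [filter_pairIndex_eq, image_insert, image_singleton] at h
    refine mem_filter.2 ⟨mem_univ _, h, fun t => card_pair ?_⟩
    exact σ.injective.ne (pL_lt_pR t).ne
  · exact eq_of_inPi'_of_pair_eq (mem_filter.1 hσ).2 (mem_filter.1 hτ).2 (congrFun h)
  · obtain ⟨⟨-, hU⟩, hcard⟩ := (mem_filter.1 hA).2
    obtain ⟨σ, hσ, rfl⟩ := exists_inPi'_eq_pair hU hcard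
    exact ⟨σ, mem_filter.2 ⟨mem_univ _, hσ⟩, rfl⟩
  · rw [blockCrossings_pair (mem_filter.1 hσ).2, pairProd]
    congr 3
    exact funext fun t => (hb _ _ ((mem_filter.1 hσ).2 t)).symm

end QExterior

section QCommuting
variable {F : Type*} [CommRing F] {Q : Type*} [Ring Q] [Algebra F Q]

def QCommuting (p : F) {N : ℕ} (ω : Fin N → Q) : Prop :=
  ∀ k l, k < l → ω l * ω k = p • (ω k * ω l)

variable {p : F} {n : ℕ} {θ : Fin n → Q}

lemma QCommuting.mul_prod_map (hθ : QCommuting p θ) (hsq : ∀ m, θ m * θ m = 0) (m : Fin n) :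
    ∀ l : List (Fin n), l.Pairwise (· < ·) →
      θ m * (l.map θ).prod = if m ∈ l then 0 else
        p ^ (l.filter (· < m)).length • ((l.orderedInsert (· ≤ ·) m).map θ).prod
  | [], _ => by simp
  | b :: l, hl => by
    rw [List.pairwise_cons] at hl
    rcases lt_trichotomy m b with hmb | rfl | hbm
    · have hm : m ∉ b :: l := fun h => by
        rcases List.mem_cons.1 h with rfl | h
        exacts [lt_irrefl _ hmb, lt_asymm hmb (hl.1 m h)]
      have hfilter : (b :: l).filter (· < m) = [] := List.filter_eq_nil_iff.2 fun c hc => by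
        rcases List.mem_cons.1 hc with rfl | hc
        exacts [by simpa using hmb.le, by simpa using (hmb.trans (hl.1 c hc)).le]
      simp [hm, hfilter, hmb.le]
    · simp [← mul_assoc, hsq]
    · rw [List.map_cons, List.prod_cons, ← mul_assoc, hθ b m hbm, smul_mul_assoc, mul_assoc,
        QCommuting.mul_prod_map hθ hsq m l hl.2]
      split_ifs <;> simp_all [List.orderedInsert, not_le.2 hbm, pow_succ, smul_smul, mul_comm]

def orderedProd (θ : Fin n → Q) (A : Finset (Fin n)) : Q := ((A.sort (· ≤ ·)).map θ).prod

lemma length_filter_sort (A : Finset (Fin n)) (m : Fin n) :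
    ((A.sort (· ≤ ·)).filter (· < m)).length = #{a ∈ A | a < m} := by
  rw [← Multiset.coe_card, ← Multiset.filter_coe, sort_eq]
  rfl

lemma sort_insert_eq_orderedInsert {A : Finset (Fin n)} {m : Fin n} (hm : m ∉ A) :
    (insert m A).sort (· ≤ ·) = (A.sort (· ≤ ·)).orderedInsert (· ≤ ·) m := by
  refine List.Perm.eq_of_pairwise' (pairwise_sort _ _)
    ((pairwise_sort _ _).orderedInsert m _) ?_
  rw [← Multiset.coe_eq_coe, sort_eq, insert_val_of_notMem hm,
    Multiset.coe_eq_coe.2 (List.perm_orderedInsert _ m _), ← Multiset.cons_coe, sort_eq]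

lemma QCommuting.mul_orderedProd (hθ : QCommuting p θ) (hsq : ∀ m, θ m * θ m = 0)
    (A : Finset (Fin n)) (m : Fin n) :
    θ m * orderedProd θ A
      = if m ∈ A then 0 else p ^ #{a ∈ A | a < m} • orderedProd θ (insert m A) := by
  rw [orderedProd, hθ.mul_prod_map hsq m _ (sortedLT_sort A).pairwise]
  simp only [mem_sort, length_filter_sort]
  split_ifs with hm
  · rfl
  · rw [orderedProd, sort_insert_eq_orderedInsert hm]

end QCommuting

section OrderedProd
variable {F : Type*} [Field F] {Q : Type*} [Ring Q] [Algebra F Q] {p : F} {n : ℕ}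
  {θ : Fin n → Q}

lemma sum_pow_card_filter_lt (p : F) (B : Finset (Fin n)) :
    ∑ m ∈ B, p ^ #{b ∈ B | b < m} = qint p #B := by
  induction B using Finset.induction_on_max with
  | empty => simp [qint]
  | insert a s hs ih =>
    have ha : a ∉ s := fun h => lt_irrefl a (hs a h)
    have hfilter : ∀ m ∈ s, ({b ∈ insert a s | b < m} : Finset (Fin n)) = {b ∈ s | b < m} :=
      fun m hm => by rw [filter_insert, if_neg (hs m hm).not_gt]
    have hfilter_a : ({b ∈ insert a s | b < a} : Finset (Fin n)) = s := by
      rw [filter_insert, if_neg (lt_irrefl a), filter_true_of_mem hs]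
    rw [sum_insert ha, sum_congr rfl fun m hm => by rw [hfilter m hm], ih, hfilter_a,
      card_insert_of_notMem ha, qint, qint, sum_range_succ, add_comm]

lemma QCommuting.sum_mul_sum_orderedProd (hθ : QCommuting p θ) (hsq : ∀ m, θ m * θ m = 0)
    (k : ℕ) :
    (∑ m, θ m) * ∑ A ∈ powersetCard k univ, orderedProd θ A
      = qint p (k + 1) • ∑ B ∈ powersetCard (k + 1) univ, orderedProd θ B := by
  calc (∑ m, θ m) * ∑ A ∈ powersetCard k univ, orderedProd θ A
      = ∑ m, ∑ A ∈ powersetCard k univ with m ∉ A,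
          p ^ #{a ∈ A | a < m} • orderedProd θ (insert m A) := by
        simp_rw [sum_mul, mul_sum, hθ.mul_orderedProd hsq, sum_filter, ite_not]
    _ = ∑ m, ∑ B ∈ powersetCard (k + 1) univ with m ∈ B,
          p ^ #{b ∈ B | b < m} • orderedProd θ B := by
        refine sum_congr rfl fun m _ => sum_nbij' (insert m) (erase · m) ?_ ?_ ?_ ?_ ?_
        · intro A hA
          simp only [mem_filter, mem_powersetCard, subset_univ, true_and] at hA ⊢
          exact ⟨by rw [card_insert_of_notMem hA.2, hA.1], mem_insert_self m A⟩
        · intro B hB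
          simp only [mem_filter, mem_powersetCard, subset_univ, true_and] at hB ⊢
          exact ⟨by rw [card_erase_of_mem hB.2, hB.1, Nat.add_sub_cancel], notMem_erase m B⟩
        · intro A hA
          exact erase_insert (mem_filter.1 hA).2
        · intro B hB
          exact insert_erase (mem_filter.1 hB).2
        · intro A hA
          rw [filter_insert, if_neg (lt_irrefl m)]
    _ = qint p (k + 1) • ∑ B ∈ powersetCard (k + 1) univ, orderedProd θ B := by
        simp_rw [sum_filter, smul_sum]
        rw [sum_comm]
        refine sum_congr rfl fun B hB => ?_
        rw [sum_ite_mem, univ_inter, ← sum_smul, sum_pow_card_filter_lt,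
          (mem_powersetCard.1 hB).2]

theorem QCommuting.sum_pow (hθ : QCommuting p θ) (hsq : ∀ m, θ m * θ m = 0) (k : ℕ) :
    (∑ m, θ m) ^ k = qfac p k • ∑ A ∈ powersetCard k univ, orderedProd θ A := by
  induction k with
  | zero => simp [qfac, orderedProd]
  | succ k ih =>
    rw [pow_succ', ih, mul_smul_comm, hθ.sum_mul_sum_orderedProd hsq, smul_smul, qfac, qfac,
      prod_range_succ]

theorem QCommuting.sum_pow_eq_smul_prod (hθ : QCommuting p θ) (hsq : ∀ m, θ m * θ m = 0) :
    (∑ m, θ m) ^ n = qfac p n • (List.ofFn θ).prod := by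
  have huniv : powersetCard n (univ : Finset (Fin n)) = {univ} := by
    simpa using powersetCard_self (univ : Finset (Fin n))
  rw [hθ.sum_pow hsq, huniv, sum_singleton, orderedProd, Fin.sort_univ, List.ofFn_eq_map]

end OrderedProd

section Pairing
variable {F : Type*} [CommRing F] {Q : Type*} [Ring Q] [Algebra F Q] {p : F} {n : ℕ}
  {ω : Fin (2 * n) → Q}

lemma mul_mul_eq_smul_of_mul_eq_smul {x y z : Q} {c d : F} (hx : x * z = c • (z * x))
    (hy : y * z = d • (z * y)) : x * y * z = (c * d) • (z * (x * y)) := by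
  rw [mul_assoc, hy, mul_smul_comm, ← mul_assoc, hx, smul_mul_assoc, smul_smul, mul_assoc,
    mul_comm]

lemma QCommuting.pair_prod (hω : QCommuting p ω) :
    QCommuting (p ^ 4) fun m => ω (pL m) * ω (pR m) := by
  intro m m' h
  have h' : (m : ℕ) < m' := h
  have hlt : ∀ i j : Fin (2 * n), (i : ℕ) < j → ω j * ω i = p • (ω i * ω j) :=
    fun i j hij => hω i j hij
  have hL := mul_mul_eq_smul_of_mul_eq_smul (hlt (pL m) (pL m') (by simp [pL]; omega))
    (hlt (pL m) (pR m') (by simp [pL, pR]; omega))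
  have hR := mul_mul_eq_smul_of_mul_eq_smul (hlt (pR m) (pL m') (by simp [pL, pR]; omega))
    (hlt (pR m) (pR m') (by simp [pR]; omega))
  simp only
  rw [← mul_assoc, hL, smul_mul_assoc, mul_assoc, hR, mul_smul_comm, smul_smul,
    mul_assoc (ω (pL m)), show p * p * (p * p) = p ^ 4 by ring]

lemma QCommuting.pair_prod_mul_self (hω : QCommuting p ω) (hsq : ∀ k, ω k * ω k = 0)
    (m : Fin n) : ω (pL m) * ω (pR m) * (ω (pL m) * ω (pR m)) = 0 := by
  rw [mul_assoc, ← mul_assoc (ω (pR m)), hω _ _ (pL_lt_pR m), smul_mul_assoc, mul_smul_comm,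
    ← mul_assoc, ← mul_assoc, hsq, zero_mul, zero_mul, smul_zero]

lemma prod_ofFn_pair_prod (ω : Fin (2 * n) → Q) :
    (List.ofFn fun m => ω (pL m) * ω (pR m)).prod = (List.ofFn ω).prod := by
  rw [List.ofFn_mul' ω, List.prod_flatten, List.map_ofFn]
  congr 1
  refine List.ofFn_inj.2 (funext fun m => ?_)
  simp [pL, pR]

end Pairing

namespace QExterior
variable {F : Type*} {q : F} {ι : Type*} [LinearOrder ι] {R : Type*} [Ring R]

def ofVector (v : ι → R) : QExterior q ι R := fun S => ∑ i ∈ S, if S = {i} then v i else 0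

@[simp] lemma ofVector_singleton (v : ι → R) (i : ι) :
    ofVector (q := q) v {i} = v i := by
  simp [ofVector]

lemma ofVector_of_card_ne_one (v : ι → R) {S : Finset ι} (h : #S ≠ 1) :
    ofVector (q := q) v S = 0 :=
  sum_eq_zero fun i _ => if_neg fun hS : S = {i} => h (hS ▸ card_singleton i)

lemma ext_of_card_eq_two {x y : QExterior q ι R} (hx : ∀ S, #S ≠ 2 → x S = 0)
    (hy : ∀ S, #S ≠ 2 → y S = 0) (h : ∀ i j, i < j → x {i, j} = y {i, j}) : x = y := by
  funext S
  by_cases hS : #S = 2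
  · obtain ⟨i, j, hij, rfl⟩ := exists_lt_and_eq_pair hS
    exact h i j hij
  · rw [hx S hS, hy S hS]

variable [CommRing F] [Algebra F R]

lemma ofVector_mul_ofVector_of_card_ne_two (v w : ι → R) {S : Finset ι}
    (h : #S ≠ 2) : (ofVector v * ofVector w : QExterior q ι R) S = 0 := by
  refine sum_eq_zero fun A hA => ?_
  by_cases hA1 : #A = 1
  · rw [ofVector_of_card_ne_one w (by rw [card_sdiff_of_subset (mem_powerset.1 hA)]; omega),
      mul_zero, smul_zero]
  · rw [ofVector_of_card_ne_one v hA1, zero_mul, smul_zero]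

lemma ofVector_mul_ofVector_apply_pair (v w : ι → R) {i j : ι} (hij : i < j) :
    (ofVector v * ofVector w : QExterior q ι R) {i, j} = v i * w j + q • (v j * w i) := by
  have hne : i ≠ j := hij.ne
  have hpow : ({j} : Finset ι).powerset = {∅, {j}} := by
    ext A
    simp [subset_singleton_iff]
  rw [mul_apply, sum_powerset_insert (by simpa using hne), hpow, sum_pair (by simp),
    sum_pair (by simp)]
  have hj : ({i, j} : Finset ι) \ {j} = {i} := by grind
  have hi : ({i, j} : Finset ι) \ {i} = {j} := by grind
  have h0 : ∀ u : ι → R, ofVector (q := q) u ∅ = 0 := fun u =>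
    ofVector_of_card_ne_one u (by simp)
  have h2 : ∀ u : ι → R, ofVector (q := q) u {i, j} = 0 := fun u =>
    ofVector_of_card_ne_one u (by simp [card_pair hne])
  simp [crossings_singleton_singleton, hij, hij.not_gt, hi, hj, h0, h2, add_comm]

end QExterior

section Specialization
variable {F : Type*} [Field F] {R : Type*} [Ring R] [Algebra F R]

lemma neg_zpow_neg_natCast (s : F) (l : ℕ) : (-s) ^ (-(l : ℤ)) = (-s⁻¹) ^ l := by
  rw [zpow_neg, zpow_natCast, ← inv_pow, inv_neg]

lemma cdet_eq_qper (s : F) {N : ℕ} (a : Fin N → Fin N → R) : cdet s a = qper (-s⁻¹) a := by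
  simp only [cdet, qper, neg_zpow_neg_natCast]

lemma pfSumInv_eq_hfSum (s : F) {n : ℕ} (b : Fin (2 * n) → Fin (2 * n) → R) :
    pfSumInv s b = hfSum (-s⁻¹) b := by
  simp only [pfSumInv, hfSum, neg_zpow_neg_natCast]

lemma QExterior.prod_ofFn_ofVector_apply_univ (q : F) {N : ℕ} (a : Fin N → Fin N → R) :
    (List.ofFn fun c => (ofVector fun i => a i c : QExterior q (Fin N) R)).prod univ
      = qper q a := by
  rw [prod_ofFn_apply_univ_of_card_eq_one _ fun c S hS => ofVector_of_card_ne_one _ hS, qper]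
  simp

end Specialization

namespace IsQSemigroup
variable {F : Type*} [Field F] {r s : F} {R : Type*} [Ring R] [Algebra F R]
open QExterior

lemma qCommuting_ofVector {N : ℕ} {a : Fin N → Fin N → R} (hs : s ≠ 0)
    (ha : IsQSemigroup r s a) :
    QCommuting (-s⁻¹) fun c => (ofVector fun i => a i c : QExterior (-s⁻¹) (Fin N) R) := by
  intro k l hkl
  refine ext_of_card_eq_two (fun S hS => ofVector_mul_ofVector_of_card_ne_two _ _ hS)
    (fun S hS => by
      rw [QExterior.smul_apply, ofVector_mul_ofVector_of_card_ne_two _ _ hS, smul_zero])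
    fun i j hij => ?_
  have h4 : a i k * a j l = (r - s) • (a i l * a j k) + a j l * a i k :=
    sub_eq_iff_eq_add.1 (ha.2.2.2 i j k l hij hkl)
  have h3 : a j k * a i l = (s * r) • (a i l * a j k) := by
    rw [mul_smul, ha.2.2.1 i j k l hij hkl, smul_smul, mul_inv_cancel₀ hs, one_smul]
  rw [QExterior.smul_apply, ofVector_mul_ofVector_apply_pair _ _ hij,
    ofVector_mul_ofVector_apply_pair _ _ hij, h4, h3]
  match_scalars
  · field_simp
    ring
  · field_simp

lemma ofVector_mul_self {N : ℕ} {a : Fin N → Fin N → R} (ha : IsQSemigroup r s a)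
    (c : Fin N) :
    (ofVector fun i => a i c : QExterior (-s⁻¹) (Fin N) R) * ofVector (fun i => a i c) = 0 :=
  ext_of_card_eq_two (fun S hS => ofVector_mul_ofVector_of_card_ne_two _ _ hS) (fun _ _ => rfl)
    fun i j hij => by
      rw [ofVector_mul_ofVector_apply_pair _ _ hij, ha.2.1 i j c hij, neg_smul, add_neg_cancel]
      rfl

lemma sum_ofVector_mul_ofVector_apply_pair {n : ℕ} {a : Fin (2 * n) → Fin (2 * n) → R}
    (ha : IsQSemigroup r s a) {i j : Fin (2 * n)} (hij : i < j) :
    (∑ m, (ofVector (fun i => a i (pL m)) * ofVector fun i => a i (pR m) :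
      QExterior (-s⁻¹) (Fin (2 * n)) R)) {i, j}
      = ∑ m, (a i (pL m) * a j (pR m) - r • (a i (pR m) * a j (pL m))) := by
  rw [QExterior.sum_apply]
  refine sum_congr rfl fun m _ => ?_
  rw [ofVector_mul_ofVector_apply_pair _ _ hij, neg_smul, ← ha.2.2.1 i j _ _ hij (pL_lt_pR m),
    ← sub_eq_add_neg]

end IsQSemigroup

theorem pfInv_eq_cdet_general {F : Type*} [Field F] (r s : F) (hs : s ≠ 0)
    {R : Type*} [Ring R] [Algebra F R] {n : ℕ} (a : Fin (2 * n) → Fin (2 * n) → R)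
    (ha : IsQSemigroup r s a) (hfac : qfac (s⁻¹ ^ 4) n ≠ 0) :
    PfInv s (fun i j => ∑ m : Fin n,
        (a i (pL m) * a j (pR m) - r • (a i (pR m) * a j (pL m))))
      = cdet s a := by
  let ω c : QExterior (-s⁻¹) (Fin (2 * n)) R := .ofVector fun i => a i c
  let Ω := ∑ m, ω (pL m) * ω (pR m)
  have hω : QCommuting (-s⁻¹) ω := ha.qCommuting_ofVector hs
  have hΩ_pow : Ω ^ n = qfac (s⁻¹ ^ 4) n • (List.ofFn ω).prod := by
    have h := hω.pair_prod.sum_pow_eq_smul_prod (hω.pair_prod_mul_self ha.ofVector_mul_self)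
    rwa [prod_ofFn_pair_prod, Even.neg_pow (by decide)] at h
  have hΩ_top : (Ω ^ n) univ = pfSumInv s fun i j => ∑ m : Fin n,
      (a i (pL m) * a j (pR m) - r • (a i (pR m) * a j (pL m))) := by
    rw [pfSumInv_eq_hfSum]
    refine QExterior.pow_apply_univ_of_card_eq_two _ (fun S hS => ?_) _
      fun i j hij => ha.sum_ofVector_mul_ofVector_apply_pair hij
    exact (QExterior.sum_apply _ _ S).trans
      (sum_eq_zero fun m _ => QExterior.ofVector_mul_ofVector_of_card_ne_two _ _ hS)
  rw [PfInv, ← hΩ_top, hΩ_pow, QExterior.smul_apply,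
    QExterior.prod_ofFn_ofVector_apply_univ, ← cdet_eq_qper, smul_smul, inv_mul_cancel₀ hfac, one_smul]

/-- In `𝒜_{r,s}(2n)` with `[n]_{s⁻⁴}! ≠ 0`: for `B′ = A 𝕁_r A^T`, i.e.
`b′_{ij} = Σ_m (a_{i,2m-1} a_{j,2m} - r a_{i,2m} a_{j,2m-1})`, one has
`Pf_{s⁻¹}(B′) = cdet_{s⁻¹}(A)`. -/
theorem pfInv_eq_cdet {F : Type*} [Field F] (r s : F) (hr : r ≠ 0) (hs : s ≠ 0)
    {R : Type*} [Ring R] [Algebra F R] {n : ℕ} (a : Fin (2 * n) → Fin (2 * n) → R)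
    (ha : IsQSemigroup r s a) (hfac : qfac (s⁻¹ ^ 4) n ≠ 0) :
    PfInv s (fun i j => ∑ m : Fin n,
        (a i (pL m) * a j (pR m) - r • (a i (pR m) * a j (pL m))))
      = cdet s a :=
  pfInv_eq_cdet_general r s hs a ha hfac
end
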